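/- arXiv:0804.2150 — 8 statements merged into one kernel-verified Lean document; each statement's English description precedes it below -/
import Mathlib

section
/- Let W be a simply-laced Coxeter group with Coxeter graph S on n vertices. There exists a group homomorphism φ : W → GL_n(F_2) sending each generator s to its flipping matrix 𝐬. Its image is the flipping group 𝐖 generated by {𝐬 : s ∈ S}, so φ is a surjective homomorphism onto 𝐖. -/
open Matrix

open scoped Classical in
/-- The flipping matrix of a vertex `s` of a simple graph: `(flipMat G s) u v = 1` iff
`u = v`, or (`v = s` and `uv` is an edge). -/
noncomputable def flipMat {V : Type*} [Fintype V] (G : SimpleGraph V) (s : V) :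
    Matrix V V (ZMod 2) :=
  Matrix.of fun u v => if u = v ∨ (v = s ∧ G.Adj u v) then 1 else 0

/-- The Coxeter graph of a simply-laced Coxeter matrix: `i` and `j` are adjacent
iff `M i j = 3`. -/
def coxGraph {n : ℕ} (M : CoxeterMatrix (Fin n)) : SimpleGraph (Fin n) :=
  SimpleGraph.fromRel (fun i j => M i j = 3)

open scoped Classical in
noncomputable def rkOne {V : Type*} [Fintype V] (G : SimpleGraph V) (i j : V) :
    Matrix V V (ZMod 2) :=
  Matrix.of fun u v => if v = j then (if G.Adj u i then 1 else 0) else 0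

lemma flipMat_eq {V : Type*} [Fintype V] [DecidableEq V] (G : SimpleGraph V) (i : V) :
    flipMat G i = 1 + rkOne G i i := by
  classical
  ext u v
  by_cases h : u = v
  · subst h
    simp [flipMat, rkOne, Matrix.one_apply, G.irrefl]
    intro h'
    subst h'
    simp [G.irrefl]
  · by_cases h2 : v = i
    · subst h2
      simp [flipMat, rkOne, Matrix.one_apply, h]
    · simp [flipMat, rkOne, Matrix.one_apply, h, h2]

open scoped Classical in
lemma rkOne_mul {V : Type*} [Fintype V] [DecidableEq V] (G : SimpleGraph V) (i j k l : V) :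
    rkOne G i j * rkOne G k l =
      (if G.Adj j k then (1 : ZMod 2) else 0) • rkOne G i l := by
  classical
  ext u v
  rw [Matrix.mul_apply]
  simp only [rkOne, Matrix.of_apply, ite_mul, zero_mul, Matrix.smul_apply, smul_eq_mul,
    Finset.sum_ite_eq', Finset.mem_univ, if_true]
  split_ifs <;> ring

lemma rkOne_sq {V : Type*} [Fintype V] [DecidableEq V] (G : SimpleGraph V) (i : V) :
    rkOne G i i * rkOne G i i = 0 := by
  rw [rkOne_mul, if_neg (G.irrefl), zero_smul]

lemma mat_add_self {V : Type*} [Fintype V] (A : Matrix V V (ZMod 2)) : A + A = 0 := by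
  ext u v
  simp [Matrix.add_apply]
  exact CharTwo.add_self_eq_zero _

lemma flipMat_sq {V : Type*} [Fintype V] [DecidableEq V] (G : SimpleGraph V) (i : V) :
    flipMat G i * flipMat G i = 1 := by
  rw [flipMat_eq]
  have e : (1 + rkOne G i i) * (1 + rkOne G i i)
      = 1 + (rkOne G i i + rkOne G i i) + rkOne G i i * rkOne G i i := by noncomm_ring
  rw [e, rkOne_sq, mat_add_self, add_zero, add_zero]

lemma flipMat_comm {V : Type*} [Fintype V] [DecidableEq V] (G : SimpleGraph V) {i j : V}
    (h : ¬ G.Adj i j) : flipMat G i * flipMat G j = flipMat G j * flipMat G i := by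
  have h' : ¬ G.Adj j i := fun hh => h hh.symm
  rw [flipMat_eq, flipMat_eq]
  have e1 : rkOne G i i * rkOne G j j = 0 := by
    rw [rkOne_mul, if_neg h, zero_smul]
  have e2 : rkOne G j j * rkOne G i i = 0 := by
    rw [rkOne_mul, if_neg h', zero_smul]
  have e3 : ∀ x y : Matrix V V (ZMod 2),
      (1 + x) * (1 + y) = 1 + x + y + x * y := by intro x y; noncomm_ring
  rw [e3, e3, e1, e2, add_zero, add_zero, add_right_comm]

lemma braid_aux {R : Type*} [Ring R] (x y : R) (hx2 : x * x = 0) (hy2 : y * y = 0)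
    (hxyx : x * y * x = x) (hyxy : y * x * y = y) (hchar : ∀ a : R, a + a = 0) :
    (1 + x) * (1 + y) * (1 + x) = (1 + y) * (1 + x) * (1 + y) := by
  have e1 : (1 + x) * (1 + y) * (1 + x)
      = 1 + (x + x) + y + x * x + x * y + y * x + x * y * x := by noncomm_ring
  have e2 : (1 + y) * (1 + x) * (1 + y)
      = 1 + (y + y) + x + y * y + y * x + x * y + y * x * y := by noncomm_ring
  rw [e1, e2, hx2, hy2, hxyx, hyxy, hchar x, hchar y]
  abel

lemma flipMat_braid {V : Type*} [Fintype V] [DecidableEq V] (G : SimpleGraph V) {i j : V}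
    (h : G.Adj i j) :
    flipMat G i * flipMat G j * flipMat G i = flipMat G j * flipMat G i * flipMat G j := by
  have h' : G.Adj j i := h.symm
  rw [flipMat_eq, flipMat_eq]
  apply braid_aux
  · exact rkOne_sq G i
  · exact rkOne_sq G j
  · rw [rkOne_mul, if_pos h, one_smul, rkOne_mul, if_pos h', one_smul]
  · rw [rkOne_mul, if_pos h', one_smul, rkOne_mul, if_pos h, one_smul]
  · exact mat_add_self

lemma comm_sq_one {Gp : Type*} [Monoid Gp] (a b : Gp) (h : a * b = b * a)
    (ha : a * a = 1) (hb : b * b = 1) : (a * b) ^ 2 = 1 := by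
  rw [sq, mul_assoc, ← mul_assoc b, ← h, ← mul_assoc, ← mul_assoc, ha, one_mul, hb]

lemma braid_pow_one {Gp : Type*} [Monoid Gp] (a b : Gp) (h : a * b * a = b * a * b)
    (ha : a * a = 1) (hb : b * b = 1) : (a * b) ^ 3 = 1 := by
  have e : (a * b) ^ 3 = (a * b * a) * (b * a * b) := by
    rw [pow_succ, pow_succ, pow_one]; simp only [mul_assoc]
  rw [e, h]
  calc (b * a * b) * (b * a * b) = b * a * (b * b) * (a * b) := by simp only [mul_assoc]
    _ = (b * a) * (a * b) := by rw [hb, mul_one]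
    _ = b * ((a * a) * b) := by simp only [mul_assoc]
    _ = 1 := by rw [ha, one_mul, hb]

noncomputable def flipUnit {V : Type*} [Fintype V] [DecidableEq V] (G : SimpleGraph V) (i : V) :
    GL V (ZMod 2) :=
  ⟨flipMat G i, flipMat G i, flipMat_sq G i, flipMat_sq G i⟩

theorem exists_vogan_representation {n : ℕ} (M : CoxeterMatrix (Fin n))
    (hM : ∀ i j : Fin n, i ≠ j → M i j = 2 ∨ M i j = 3) :
    ∃ φ : M.Group →* GL (Fin n) (ZMod 2),
      (∀ i : Fin n, (φ (M.simple i) : Matrix (Fin n) (Fin n) (ZMod 2)) = flipMat (coxGraph M) i) ∧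
      φ.range = Subgroup.closure
        {g : GL (Fin n) (ZMod 2) | ∃ i : Fin n,
          (g : Matrix (Fin n) (Fin n) (ZMod 2)) = flipMat (coxGraph M) i} := by
  set G := coxGraph M with hG
  set f : Fin n → GL (Fin n) (ZMod 2) := flipUnit G with hf
  have hval : ∀ i, (f i : Matrix (Fin n) (Fin n) (ZMod 2)) = flipMat G i := fun i => rfl
  have hadj : ∀ i j : Fin n, i ≠ j → (M i j = 3 ↔ G.Adj i j) := by
    intro i j hij
    constructor
    · intro h3
      exact ⟨hij, Or.inl h3⟩
    · rintro ⟨-, h3 | h3⟩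
      · exact h3
      · rw [M.symmetric j i] at h3; exact h3
  have hsq : ∀ i, f i * f i = 1 := by
    intro i
    ext : 1
    exact flipMat_sq G i
  have hlift : M.IsLiftable f := by
    intro i j
    by_cases hij : i = j
    · subst hij
      rw [M.diagonal i, pow_one, hsq]
    · rcases hM i j hij with h2 | h3
      · have hnadj : ¬ G.Adj i j := by
          intro hadj'
          rw [← hadj i j hij] at hadj'
          omega
        have hcomm : f i * f j = f j * f i := by
          ext : 1
          exact flipMat_comm G hnadj
        rw [h2]
        exact comm_sq_one _ _ hcomm (hsq i) (hsq j)
      · have hadj' : G.Adj i j := (hadj i j hij).mp h3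
        have hbraid : f i * f j * f i = f j * f i * f j := by
          ext : 1
          push_cast
          exact flipMat_braid G hadj'
        rw [h3]
        exact braid_pow_one _ _ hbraid (hsq i) (hsq j)
  set cs := M.toCoxeterSystem
  refine ⟨cs.lift ⟨f, hlift⟩, ?_, ?_⟩
  · intro i
    rw [← M.toCoxeterSystem_simple]
    rw [cs.lift_apply_simple hlift i]
    exact hval i
  · have hset : {g : GL (Fin n) (ZMod 2) | ∃ i : Fin n,
        (g : Matrix (Fin n) (Fin n) (ZMod 2)) = flipMat (coxGraph M) i}
        = (cs.lift ⟨f, hlift⟩) '' Set.range M.simple := by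
      ext g
      constructor
      · rintro ⟨i, hi⟩
        refine ⟨M.simple i, Set.mem_range_self i, ?_⟩
        rw [← M.toCoxeterSystem_simple, cs.lift_apply_simple hlift i]
        exact Units.ext (by rw [hval i, ← hi])
      · rintro ⟨-, ⟨i, rfl⟩, rfl⟩
        refine ⟨i, ?_⟩
        rw [← M.toCoxeterSystem_simple, cs.lift_apply_simple hlift i]
        exact hval i
    rw [hset, ← MonoidHom.map_closure,
      show Set.range M.simple = Set.range cs.simple by rw [M.toCoxeterSystem_simple],
      cs.subgroup_closure_range_simple, ← MonoidHom.range_eq_map]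
end

section
/- If s_0, s_1, …, s_t is a walk in the graph S (s_i adjacent to s_{i-1} for all i), then E_{s_t} E_{s_{t-1}} ⋯ E_{s_0} = E_{s_0} if s_t = s_0, and E_{s_t} E_{s_{t-1}} ⋯ E_{s_0} = E_{s_t} E_{s_0} if s_t is adjacent to s_0. -/
open Matrix

open scoped Classical in
/-- The matrix `E_s` sending the basis vector `ẽ_v` to `0` for `v ≠ s` and `ẽ_s` to the sum
of the `ẽ_u` over neighbors `u` of `s`. -/
noncomputable def eMat {V : Type*} [Fintype V] (G : SimpleGraph V) (s : V) :
    Matrix V V (ZMod 2) :=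
  Matrix.of fun u v => if v = s ∧ G.Adj u v then 1 else 0

open scoped Classical in
noncomputable def mMat {V : Type*} [Fintype V] (G : SimpleGraph V) (a b : V) :
    Matrix V V (ZMod 2) :=
  Matrix.of fun u v => if v = b ∧ G.Adj u a then 1 else 0

lemma eMat_eq_mMat {V : Type*} [Fintype V] (G : SimpleGraph V) (s : V) :
    eMat G s = mMat G s s := by
  ext u v
  simp only [eMat, mMat, of_apply]
  by_cases h : v = s
  · subst h; simp
  · simp [h]

open scoped Classical in
lemma mMat_mul {V : Type*} [Fintype V] (G : SimpleGraph V) (a b c d : V) :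
    mMat G a b * mMat G c d = if G.Adj c b then mMat G a d else 0 := by
  by_cases hcb : G.Adj c b <;>
    [rw [if_pos hcb]; rw [if_neg hcb]] <;>
  · ext u v
    simp only [Matrix.mul_apply, mMat, of_apply, Matrix.zero_apply]
    rw [Finset.sum_eq_single b]
    · by_cases hua : G.Adj u a <;> by_cases hvd : v = d <;> simp [hcb, hua, hvd, G.adj_comm b c]
    · intro k _ hk
      simp [hk]
    · simp

/-- If `s_0, s_1, …, s_t` is a walk in the graph, then
`E_{s_t} E_{s_{t-1}} ⋯ E_{s_0} = E_{s_0}` if `s_t = s_0`, and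
`E_{s_t} E_{s_{t-1}} ⋯ E_{s_0} = E_{s_t} E_{s_0}` if `s_t` is adjacent to `s_0`. -/
theorem eMat_prod_walk {V : Type*} [Fintype V] [DecidableEq V]
    (G : SimpleGraph V) (t : ℕ) (w : ℕ → V) (hw : ∀ i < t, G.Adj (w (i + 1)) (w i)) :
    (w t = w 0 →
      ((List.range (t + 1)).map (fun i => eMat G (w (t - i)))).prod = eMat G (w 0)) ∧
    (G.Adj (w t) (w 0) →
      ((List.range (t + 1)).map (fun i => eMat G (w (t - i)))).prod
        = eMat G (w t) * eMat G (w 0)) := by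
  have key : ∀ t : ℕ, (∀ i < t, G.Adj (w (i + 1)) (w i)) →
      ((List.range (t + 1)).map (fun i => eMat G (w (t - i)))).prod = mMat G (w t) (w 0) := by
    intro t
    induction t with
    | zero => intro _; simp [eMat_eq_mMat]
    | succ n ih =>
      intro h
      rw [List.range_succ_eq_map]
      simp only [List.map_cons, List.prod_cons, List.map_map]
      have : ((List.range (n + 1)).map ((fun i => eMat G (w (n + 1 - i))) ∘ Nat.succ)).prod
          = mMat G (w n) (w 0) := by
        rw [show ((fun i => eMat G (w (n + 1 - i))) ∘ Nat.succ)
            = fun i => eMat G (w (n - i)) from funext fun i => by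
          simp [Nat.succ_sub_succ]]
        exact ih fun i hi => h i (Nat.lt_succ_of_lt hi)
      rw [this, Nat.sub_zero, eMat_eq_mMat, mMat_mul,
        if_pos ((h n (Nat.lt_succ_self n)).symm)]
  constructor
  · intro h0
    rw [key t hw, h0, ← eMat_eq_mMat]
  · intro hadj
    rw [key t hw, eMat_eq_mMat, eMat_eq_mMat, mMat_mul, if_pos hadj.symm]
end

section
/- For a simply-laced Coxeter group W with connected Coxeter graph on at least two vertices, the center Z(W) is contained in the kernel of the Vogan representation φ : W → GL_n(F_2). -/
open Matrix

open scoped Classical in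
/-- Key lemma: an invertible matrix commuting with all flipping matrices of a connected
graph on at least two vertices is the identity. -/
lemma eq_one_of_commute_flip {n : ℕ} (G : SimpleGraph (Fin n))
    (hconn : G.Connected) (hn : 2 ≤ n) (A : GL (Fin n) (ZMod 2))
    (hcomm : ∀ s : Fin n, (A : Matrix (Fin n) (Fin n) (ZMod 2)) * flipMat G s
      = flipMat G s * (A : Matrix (Fin n) (Fin n) (ZMod 2))) : A = 1 := by
  set B : Matrix (Fin n) (Fin n) (ZMod 2) := (A : Matrix (Fin n) (Fin n) (ZMod 2)) with hB
  -- every vertex has a neighbor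
  have hnbr : ∀ s : Fin n, ∃ u, G.Adj u s := by
    intro s
    obtain ⟨t, ht⟩ := Fintype.exists_ne_of_one_lt_card (by rw [Fintype.card_fin]; omega) s
    obtain ⟨p⟩ := hconn.preconnected s t
    cases p with
    | nil => exact absurd rfl ht.symm
    | cons h q => exact ⟨_, h.symm⟩
  -- off-diagonal entries of row s vanish
  have hoff : ∀ s v : Fin n, v ≠ s → B s v = 0 := by
    intro s v hv
    obtain ⟨u, hu⟩ := hnbr s
    have hus : u ≠ s := G.ne_of_adj hu
    have h := congrFun (congrFun (hcomm s) u) v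
    have hAF : (B * flipMat G s) u v = B u v := by
      simp only [Matrix.mul_apply, flipMat, Matrix.of_apply]
      rw [Finset.sum_eq_single v]
      · simp
      · intro k _ hk
        have : ¬(k = v ∨ (v = s ∧ G.Adj k v)) := by
          rintro (h | ⟨h, _⟩)
          · exact hk h
          · exact hv h
        simp [this]
      · simp
    have key : ∀ k : Fin n, flipMat G s u k * B k v
        = (if k = u then B k v else 0) + (if k = s then B k v else 0) := by
      intro k
      simp only [flipMat, Matrix.of_apply]
      rcases eq_or_ne k u with hk | hk
      · subst hk
        rw [if_pos (Or.inl rfl), if_pos rfl, if_neg hus, one_mul, add_zero]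
      · rcases eq_or_ne k s with hks | hks
        · subst hks
          rw [if_pos (Or.inr ⟨rfl, hu⟩), if_neg hk, if_pos rfl, one_mul, zero_add]
        · rw [if_neg ?_, if_neg hk, if_neg hks, zero_mul, add_zero]
          rintro (h | ⟨h, -⟩)
          · exact hk h.symm
          · exact hks h
    have hFA : (flipMat G s * B) u v = B u v + B s v := by
      rw [Matrix.mul_apply, Finset.sum_congr rfl fun k _ => key k, Finset.sum_add_distrib]
      simp
    rw [hAF, hFA] at h
    have := (left_eq_add).mp h
    exact this
  -- diagonal entries equal one
  have hdiag : ∀ s : Fin n, B s s = 1 := by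
    intro s
    have h1 : (B * ((A⁻¹ : GL (Fin n) (ZMod 2)) : Matrix (Fin n) (Fin n) (ZMod 2))) s s = 1 := by
      have : B * ((A⁻¹ : GL (Fin n) (ZMod 2)) : Matrix (Fin n) (Fin n) (ZMod 2)) = 1 := by
        rw [hB]
        exact A.mul_inv
      rw [this]; simp
    rw [Matrix.mul_apply] at h1
    have h2 : ∀ k : Fin n, k ≠ s →
        B s k * ((A⁻¹ : GL (Fin n) (ZMod 2)) : Matrix (Fin n) (Fin n) (ZMod 2)) k s = 0 := by
      intro k hk
      rw [hoff s k hk, zero_mul]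
    rw [Finset.sum_eq_single s (fun k _ hk => h2 k hk) (by simp)] at h1
    have hall : ∀ a b : ZMod 2, a * b = 1 → a = 1 := by decide
    exact hall _ _ h1
  apply Units.ext
  ext u v
  by_cases huv : u = v
  · subst huv
    simpa using hdiag u
  · simp only [Units.val_one, Matrix.one_apply_ne huv]
    exact hoff u v (Ne.symm huv)

theorem center_le_ker_vogan {n : ℕ} (M : CoxeterMatrix (Fin n))
    (hM : ∀ i j : Fin n, i ≠ j → M i j = 2 ∨ M i j = 3)
    (hconn : (coxGraph M).Connected) (hn : 2 ≤ n)
    (φ : M.Group →* GL (Fin n) (ZMod 2))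
    (hφ : ∀ i : Fin n, (φ (M.simple i) : Matrix (Fin n) (Fin n) (ZMod 2))
      = flipMat (coxGraph M) i) :
    Subgroup.center M.Group ≤ φ.ker := by
  intro z hz
  rw [MonoidHom.mem_ker]
  apply eq_one_of_commute_flip (coxGraph M) hconn hn
  intro s
  have h := Subgroup.mem_center_iff.mp hz (M.simple s)
  have h2 : φ (z * M.simple s) = φ (M.simple s * z) := by rw [h]
  rw [_root_.map_mul, _root_.map_mul] at h2
  have h3 := congrArg Units.val h2
  simp only [Units.val_mul] at h3
  rw [hφ s] at h3
  exact h3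
end

section
/- Let J be a subset of the vertex set of a Coxeter graph S. Every matrix G in the subgroup 𝐖_J of the flipping group (generated by {𝐬 : s ∈ J}) is block lower triangular with respect to the partition (J, S∖J): G_{uv} = 0 whenever v ∈ S∖J and u ∈ J. Moreover, the map ψ : 𝐖_J → GL_J(F_2) sending G to its submatrix G[J] with rows and columns in J is a surjective group homomorphism onto the flipping group of the induced subgraph on J. -/
open Matrix

/-- The flipping group of a simple graph: the subgroup of `GL_n(F_2)` generated by the
flipping matrices of the vertices. -/
noncomputable def flipGroup {V : Type*} [Fintype V] [DecidableEq V] (G : SimpleGraph V) :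
    Subgroup (GL V (ZMod 2)) :=
  Subgroup.closure {g : GL V (ZMod 2) | ∃ s : V, (g : Matrix V V (ZMod 2)) = flipMat G s}

namespace FlipAux

variable {V : Type*} [Fintype V] [DecidableEq V] (G : SimpleGraph V)

open scoped Classical in
/-- The "edge part" of a flipping matrix. -/
noncomputable def flipE (s : V) : Matrix V V (ZMod 2) :=
  Matrix.of fun u v => if v = s ∧ G.Adj u v then 1 else 0

lemma flipMat_eq (s : V) : flipMat G s = 1 + flipE G s := by
  classical
  ext u v
  by_cases h : u = v
  · subst h
    simp [flipMat, flipE, Matrix.add_apply, Matrix.one_apply, G.irrefl]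
  · simp [flipMat, flipE, h, Matrix.add_apply, Matrix.one_apply]

lemma flipE_mul_self (s : V) : flipE G s * flipE G s = 0 := by
  classical
  ext u v
  rw [Matrix.mul_apply]
  refine Finset.sum_eq_zero fun w _ => ?_
  by_cases h1 : w = s ∧ G.Adj u w
  · by_cases h2 : v = s ∧ G.Adj w v
    · exfalso
      obtain ⟨hw, _⟩ := h1
      obtain ⟨hv, hadj⟩ := h2
      subst hw; subst hv
      exact G.irrefl hadj
    · simp [flipE, h2]
  · simp [flipE, h1]

lemma flipMat_sq (s : V) : flipMat G s * flipMat G s = 1 := by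
  rw [flipMat_eq]
  have h2 : flipE G s + flipE G s = 0 := by
    ext u v
    exact CharTwo.add_self_eq_zero _
  have h0 := flipE_mul_self G s
  have hexp : (1 + flipE G s) * (1 + flipE G s)
      = 1 + (flipE G s + flipE G s) + flipE G s * flipE G s := by noncomm_ring
  rw [hexp, h2, h0, add_zero, add_zero]

/-- The flipping matrix as an element of `GL`. -/
noncomputable def flipUnit (s : V) : GL V (ZMod 2) :=
  ⟨flipMat G s, flipMat G s, flipMat_sq G s, flipMat_sq G s⟩

variable (J : Set V) [Fintype ↥J]

/-- Block lower triangularity predicate. -/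
def Tri (A : Matrix V V (ZMod 2)) : Prop :=
  ∀ u ∈ J, ∀ v ∉ J, A u v = 0

lemma tri_one : Tri J (1 : Matrix V V (ZMod 2)) := by
  intro u hu v hv
  exact Matrix.one_apply_ne (fun h => hv (h ▸ hu))

lemma tri_mul {A B : Matrix V V (ZMod 2)} (hA : Tri J A) (hB : Tri J B) :
    Tri J (A * B) := by
  intro u hu v hv
  rw [Matrix.mul_apply]
  refine Finset.sum_eq_zero fun w _ => ?_
  by_cases hw : w ∈ J
  · rw [hB w hw v hv, mul_zero]
  · rw [hA u hu w hw, zero_mul]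

lemma tri_pow {A : Matrix V V (ZMod 2)} (hA : Tri J A) (n : ℕ) : Tri J (A ^ n) := by
  induction n with
  | zero => simpa using tri_one J
  | succ n ih => rw [pow_succ]; exact tri_mul J ih hA

lemma tri_flipMat {s : V} (hs : s ∈ J) : Tri J (flipMat G s) := by
  classical
  intro u hu v hv
  have h1 : u ≠ v := fun h => hv (h ▸ hu)
  have h2 : v ≠ s := fun h => hv (h ▸ hs)
  simp [flipMat, h1, h2]

/-- Block triangularity for all elements of the subgroup generated by `{𝐬 : s ∈ J}`. -/
lemma tri_of_mem {g : GL V (ZMod 2)}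
    (hg : g ∈ Subgroup.closure
      {g : GL V (ZMod 2) | ∃ s ∈ J, (g : Matrix V V (ZMod 2)) = flipMat G s}) :
    Tri J (g : Matrix V V (ZMod 2)) := by
  induction hg using Subgroup.closure_induction with
  | mem x hx =>
    obtain ⟨s, hs, hxs⟩ := hx
    rw [hxs]
    exact tri_flipMat G J hs
  | one => simpa using tri_one J
  | mul x y _ _ hx hy => exact tri_mul J hx hy
  | inv x _ hx =>
    have hfin : Finite (GL V (ZMod 2)) := inferInstance
    have hpos : 0 < orderOf x := orderOf_pos x
    have hinv : x⁻¹ = x ^ (orderOf x - 1) := by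
      refine inv_eq_of_mul_eq_one_right ?_
      rw [← pow_succ', Nat.sub_add_cancel hpos, pow_orderOf_eq_one]
    rw [hinv]
    have : ((x ^ (orderOf x - 1) : GL V (ZMod 2)) : Matrix V V (ZMod 2))
        = (x : Matrix V V (ZMod 2)) ^ (orderOf x - 1) := Units.val_pow_eq_pow_val x _
    rw [this]
    exact tri_pow J hx _

lemma submatrix_mul {A B : Matrix V V (ZMod 2)} (hA : Tri J A) :
    (A * B).submatrix (Subtype.val : ↥J → V) (Subtype.val : ↥J → V)
      = A.submatrix (Subtype.val : ↥J → V) (Subtype.val : ↥J → V)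
        * B.submatrix (Subtype.val : ↥J → V) (Subtype.val : ↥J → V) := by
  classical
  ext a b
  rw [Matrix.submatrix_apply, Matrix.mul_apply, Matrix.mul_apply]
  have : (∑ x : ↥J, A.submatrix (Subtype.val : ↥J → V) (Subtype.val : ↥J → V) a x
      * B.submatrix (Subtype.val : ↥J → V) (Subtype.val : ↥J → V) x b)
      = ∑ w ∈ J.toFinset, A (a : V) w * B w (b : V) := by
    simp only [Matrix.submatrix_apply]
    exact Finset.sum_set_coe (f := fun w => A (a : V) w * B w (b : V)) _
  rw [this]
  refine (Finset.sum_subset (Finset.subset_univ J.toFinset) ?_).symm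
  intro w _ hw
  rw [Set.mem_toFinset] at hw
  rw [hA (a : V) a.2 w hw, zero_mul]

lemma submatrix_flipMat {s : V} (hs : s ∈ J) :
    (flipMat G s).submatrix (Subtype.val : ↥J → V) (Subtype.val : ↥J → V)
      = flipMat (G.induce J) ⟨s, hs⟩ := by
  classical
  ext a b
  simp only [Matrix.submatrix_apply, flipMat, Matrix.of_apply]
  have hiff : ((a : V) = (b : V) ∨ ((b : V) = s ∧ G.Adj (a : V) (b : V)))
      ↔ (a = b ∨ (b = ⟨s, hs⟩ ∧ (G.induce J).Adj a b)) := by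
    constructor
    · rintro (h | ⟨h1, h2⟩)
      · exact Or.inl (Subtype.ext h)
      · exact Or.inr ⟨Subtype.ext h1, h2⟩
    · rintro (h | ⟨h1, h2⟩)
      · exact Or.inl (congrArg Subtype.val h)
      · exact Or.inr ⟨congrArg Subtype.val h1, h2⟩
  by_cases h : (a : V) = (b : V) ∨ ((b : V) = s ∧ G.Adj (a : V) (b : V))
  · rw [if_pos h, if_pos (hiff.mp h)]
  · rw [if_neg h, if_neg (fun hq => h (hiff.mpr hq))]

end FlipAux

theorem flipSubgroup_block_triangular_and_submatrix_hom
    {V : Type*} [Fintype V] [DecidableEq V] (G : SimpleGraph V)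
    (J : Set V) [Fintype ↥J]
    (WJ : Subgroup (GL V (ZMod 2)))
    (hWJ : WJ = Subgroup.closure
      {g : GL V (ZMod 2) | ∃ s ∈ J, (g : Matrix V V (ZMod 2)) = flipMat G s}) :
    (∀ g ∈ WJ, ∀ u ∈ J, ∀ v ∉ J, (g : Matrix V V (ZMod 2)) u v = 0) ∧
    ∃ ψ : WJ →* GL ↥J (ZMod 2),
      (∀ g : WJ, (ψ g : Matrix ↥J ↥J (ZMod 2))
        = ((g : GL V (ZMod 2)) : Matrix V V (ZMod 2)).submatrix Subtype.val Subtype.val) ∧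
      ψ.range = flipGroup (G.induce J) := by
  classical
  subst hWJ
  set S : Set (GL V (ZMod 2)) :=
    {g : GL V (ZMod 2) | ∃ s ∈ J, (g : Matrix V V (ZMod 2)) = flipMat G s} with hS
  set WJ := Subgroup.closure S with hW
  -- block triangularity
  have tri : ∀ g ∈ WJ, FlipAux.Tri J (g : Matrix V V (ZMod 2)) := fun g hg =>
    FlipAux.tri_of_mem G J hg
  refine ⟨fun g hg => tri g hg, ?_⟩
  -- the submatrix map
  have sub_inv : ∀ g : WJ,
      ((((g : GL V (ZMod 2)) : Matrix V V (ZMod 2)).submatrix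
          (Subtype.val : ↥J → V) (Subtype.val : ↥J → V))
        * (((g⁻¹ : WJ) : GL V (ZMod 2)) : Matrix V V (ZMod 2)).submatrix
          (Subtype.val : ↥J → V) (Subtype.val : ↥J → V)) = 1 := by
    intro g
    rw [← FlipAux.submatrix_mul J (tri _ g.2)]
    have h1 : (g : GL V (ZMod 2)) * ((g⁻¹ : WJ) : GL V (ZMod 2)) = 1 := by
      rw [← Subgroup.coe_mul, mul_inv_cancel, Subgroup.coe_one]
    have h2 : ((g : GL V (ZMod 2)) : Matrix V V (ZMod 2))
        * (((g⁻¹ : WJ) : GL V (ZMod 2)) : Matrix V V (ZMod 2)) = 1 := by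
      rw [← Units.val_mul, h1, Units.val_one]
    rw [h2, Matrix.submatrix_one _ Subtype.val_injective]
  let ψ : WJ →* GL ↥J (ZMod 2) :=
    { toFun := fun g =>
        ⟨((g : GL V (ZMod 2)) : Matrix V V (ZMod 2)).submatrix
            (Subtype.val : ↥J → V) (Subtype.val : ↥J → V),
          (((g⁻¹ : WJ) : GL V (ZMod 2)) : Matrix V V (ZMod 2)).submatrix
            (Subtype.val : ↥J → V) (Subtype.val : ↥J → V),
          sub_inv g, by simpa using sub_inv g⁻¹⟩
      map_one' := by
        refine Units.ext ?_
        show ((1 : GL V (ZMod 2)) : Matrix V V (ZMod 2)).submatrix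
            (Subtype.val : ↥J → V) (Subtype.val : ↥J → V) = 1
        rw [Units.val_one, Matrix.submatrix_one _ Subtype.val_injective]
      map_mul' := fun g h => by
        refine Units.ext ?_
        show (((g * h : WJ) : GL V (ZMod 2)) : Matrix V V (ZMod 2)).submatrix
            (Subtype.val : ↥J → V) (Subtype.val : ↥J → V) = _
        rw [Subgroup.coe_mul, Units.val_mul]
        exact FlipAux.submatrix_mul J (tri _ g.2) }
  refine ⟨ψ, fun g => rfl, ?_⟩
  -- range computation
  have hψgen : ψ '' ((Subtype.val : WJ → GL V (ZMod 2)) ⁻¹' S)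
      = {g : GL ↥J (ZMod 2) | ∃ t : ↥J,
          (g : Matrix ↥J ↥J (ZMod 2)) = flipMat (G.induce J) t} := by
    ext x
    constructor
    · rintro ⟨g, hg, rfl⟩
      obtain ⟨s, hs, hgs⟩ := hg
      refine ⟨⟨s, hs⟩, ?_⟩
      show ((g : GL V (ZMod 2)) : Matrix V V (ZMod 2)).submatrix
          (Subtype.val : ↥J → V) (Subtype.val : ↥J → V) = _
      rw [hgs, FlipAux.submatrix_flipMat G J hs]
    · rintro ⟨⟨s, hs⟩, hx⟩
      have hmem : FlipAux.flipUnit G s ∈ WJ :=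
        Subgroup.subset_closure ⟨s, hs, rfl⟩
      refine ⟨⟨FlipAux.flipUnit G s, hmem⟩, ⟨s, hs, rfl⟩, ?_⟩
      refine Units.ext ?_
      show ((FlipAux.flipUnit G s : GL V (ZMod 2)) : Matrix V V (ZMod 2)).submatrix
          (Subtype.val : ↥J → V) (Subtype.val : ↥J → V) = (x : Matrix ↥J ↥J (ZMod 2))
      rw [hx]
      exact FlipAux.submatrix_flipMat G J hs
  rw [MonoidHom.range_eq_map, ← Subgroup.closure_closure_coe_preimage (k := S),
    MonoidHom.map_closure, hψgen]
  rfl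
end

section
/- The flipping group 𝐖 of the path graph A_n (n ≥ 2) is isomorphic to the symmetric group S_{n+1}, via the map α sending G ∈ 𝐖 to the permutation it induces on the set {ō_1, …, ō_{n+1}}, where 𝐬_i acts as the transposition (ō_i, ō_{i+1}). -/
open Matrix

/-- The path graph of type `Aₙ`, with vertices `0, 1, …, n-1` (vertex `i` standing for
`s_{i+1}`) and edges between consecutive vertices. -/
def pathG (n : ℕ) : SimpleGraph (Fin n) :=
  SimpleGraph.fromRel (fun i j => i.val + 1 = j.val)

set_option maxHeartbeats 1600000 in
/-- The flipping group of the path graph `Aₙ` (`n ≥ 2`) is isomorphic to the symmetric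
group `S_{n+1}` via the permutation action on `{ō_1, …, ō_{n+1}}` (here `o j = ō_{j+1}`). -/
theorem flipGroup_pathG_iso_symmGroup (n : ℕ) (hn : 2 ≤ n)
    (o : Fin (n + 1) → (Fin n → ZMod 2))
    (h0 : o 0 = Pi.single (⟨0, by omega⟩ : Fin n) 1)
    (hmid : ∀ (j : Fin (n + 1)) (_h1 : 1 ≤ j.val) (_h2 : j.val ≤ n - 1),
      o j = Pi.single (⟨j.val - 1, by omega⟩ : Fin n) 1 +
        Pi.single (⟨j.val, by omega⟩ : Fin n) 1)
    (hlast : o ⟨n, by omega⟩ = Pi.single (⟨n - 1, by omega⟩ : Fin n) 1) :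
    ∃ α : flipGroup (pathG n) ≃* Equiv.Perm (Fin (n + 1)),
      ∀ (g : flipGroup (pathG n)) (j : Fin (n + 1)),
        ((g : GL (Fin n) (ZMod 2)) : Matrix (Fin n) (Fin n) (ZMod 2)).mulVec (o j)
          = o (α g j) := by
  classical
  -- ## Coordinate formula for the vectors `o j`
  have oval : ∀ (j : Fin (n + 1)) (k : Fin n),
      o j k = (if k.val + 1 = j.val then 1 else 0) +
        (if k.val = j.val ∧ j.val ≤ n - 1 then 1 else 0) := by
    intro j k
    have hk := k.isLt
    have hj := j.isLt
    by_cases hj0 : j.val = 0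
    · rw [show j = 0 from Fin.ext hj0, h0]
      simp only [Pi.single_apply, Fin.ext_iff, Fin.val_zero]
      split_ifs <;> first | rfl | omega | contradiction | simp_all
    · by_cases hjn : j.val = n
      · rw [show j = ⟨n, by omega⟩ from Fin.ext hjn, hlast]
        simp only [Pi.single_apply, Fin.ext_iff]
        split_ifs <;> first | rfl | omega | contradiction
      · rw [hmid j (by omega) (by omega)]
        simp only [Pi.add_apply, Pi.single_apply, Fin.ext_iff]
        split_ifs <;> first | rfl | omega | contradiction
  -- ## Injectivity of `o`
  have hlt : ∀ j1 j2 : Fin (n + 1), j1.val < j2.val → o j1 ≠ o j2 := by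
    intro j1 j2 hlt h
    have hj1 := j1.isLt
    have hj2 := j2.isLt
    by_cases hc : j2.val ≤ n - 1
    · have hk := congrFun h ⟨j2.val, by omega⟩
      rw [oval, oval] at hk
      simp only at hk
      split_ifs at hk <;> first | omega | contradiction | exact absurd hk (by decide) | (simp only [true_and, and_true] at *; omega)
    · by_cases hc2 : j1.val = n - 1
      · have hk := congrFun h ⟨n - 2, by omega⟩
        rw [oval, oval] at hk
        simp only at hk
        split_ifs at hk <;> first | omega | contradiction | exact absurd hk (by decide) | (simp only [true_and, and_true] at *; omega)
      · have hk := congrFun h ⟨n - 1, by omega⟩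
        rw [oval, oval] at hk
        simp only at hk
        split_ifs at hk <;> first | omega | contradiction | exact absurd hk (by decide) | (simp only [true_and, and_true] at *; omega)
  have hoinj : Function.Injective o := by
    intro j1 j2 h
    rcases lt_trichotomy j1.val j2.val with h1 | h1 | h1
    · exact absurd h (hlt _ _ h1)
    · exact Fin.ext h1
    · exact absurd h.symm (hlt _ _ h1)
  -- ## The action of the flipping matrices on the `o j`
  have hadj : ∀ u s : Fin n, (pathG n).Adj u s ↔
      u.val ≠ s.val ∧ (u.val + 1 = s.val ∨ s.val + 1 = u.val) := by
    intro u s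
    simp [pathG, SimpleGraph.fromRel_adj, Fin.ext_iff]
  have swapval : ∀ (s : Fin n) (j : Fin (n + 1)),
      (Equiv.swap s.castSucc s.succ j).val
        = if j.val = s.val then s.val + 1 else if j.val = s.val + 1 then s.val else j.val := by
    intro s j
    rw [Equiv.swap_apply_def]
    simp only [apply_ite Fin.val, Fin.coe_castSucc, Fin.val_succ, Fin.ext_iff]
  have hmv : ∀ (s : Fin n) (x : Fin n → ZMod 2) (u : Fin n),
      (flipMat (pathG n) s *ᵥ x) u = x u + (if (pathG n).Adj u s then x s else 0) := by
    intro s x u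
    have hsplit : ∀ v : Fin n,
        (flipMat (pathG n) s) u v * x v
          = (if u = v then x v else 0) + (if v = s ∧ (pathG n).Adj u v then x v else 0) := by
      intro v
      simp only [flipMat, Matrix.of_apply]
      by_cases h1 : u = v
      · by_cases h2 : v = s ∧ (pathG n).Adj u v
        · exact absurd (h1 ▸ h2.2) ((pathG n).irrefl)
        · simp [h1, h2]
      · by_cases h2 : v = s ∧ (pathG n).Adj u v
        · obtain ⟨rfl, hA⟩ := h2
          simp [h1, hA]
        · simp [h1, h2]
    calc (flipMat (pathG n) s *ᵥ x) u = ∑ v, (flipMat (pathG n) s) u v * x v := rfl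
      _ = ∑ v, ((if u = v then x v else 0) + (if v = s ∧ (pathG n).Adj u v then x v else 0)) :=
          Finset.sum_congr rfl fun v _ => hsplit v
      _ = (∑ v, if u = v then x v else 0)
            + ∑ v, (if v = s ∧ (pathG n).Adj u v then x v else 0) := Finset.sum_add_distrib
      _ = x u + (if (pathG n).Adj u s then x s else 0) := by
          congr 1
          · simp [Finset.sum_ite_eq]
          · have h3 : ∀ v : Fin n, (if v = s ∧ (pathG n).Adj u v then x v else 0)
                = (if v = s then (if (pathG n).Adj u s then x s else 0) else 0) := by
              intro v
              by_cases hv : v = s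
              · subst hv; by_cases hA : (pathG n).Adj u v <;> simp [hA]
              · simp [hv]
            rw [Finset.sum_congr rfl fun v _ => h3 v, Finset.sum_ite_eq']
            simp
  have hcore : ∀ (s : Fin n) (j : Fin (n + 1)),
      flipMat (pathG n) s *ᵥ (o j) = o (Equiv.swap s.castSucc s.succ j) := by
    intro s j
    funext u
    rw [hmv s (o j) u, oval j u, oval j s, oval (Equiv.swap s.castSucc s.succ j) u]
    rw [swapval s j]
    simp only [hadj]
    have hu := u.isLt; have hs := s.isLt; have hj := j.isLt
    split_ifs <;> first | rfl | decide | omega | contradiction | (simp only [true_and, and_true] at *; omega)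
  -- ## A basis from `o`
  set b : Fin n → (Fin n → ZMod 2) := fun i => o i.succ with hb
  have hvv : ∀ v : Fin n → ZMod 2, v + v = 0 := by
    intro v; funext k
    have h2 : ∀ x : ZMod 2, x + x = 0 := by decide
    exact h2 (v k)
  have hb_mid : ∀ (i : Fin n) (_hi : i.val + 1 ≤ n - 1),
      b i = Pi.single (⟨i.val, i.isLt⟩ : Fin n) 1
        + Pi.single (⟨i.val + 1, by omega⟩ : Fin n) 1 := by
    intro i hi
    exact hmid i.succ (by simp) (by simpa using hi)
  have hb_last : b ⟨n - 1, by omega⟩ = Pi.single (⟨n - 1, by omega⟩ : Fin n) 1 := by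
    have hs : (⟨n - 1, by omega⟩ : Fin n).succ = ⟨n, by omega⟩ := by
      apply Fin.ext; simp; omega
    show o (⟨n - 1, by omega⟩ : Fin n).succ = _
    rw [hs, hlast]
  set B : ℕ → (Fin n → ZMod 2) := fun i => if h : i < n then b ⟨i, h⟩ else 0 with hB
  set E : ℕ → (Fin n → ZMod 2) :=
    fun k => if h : k < n then Pi.single (⟨k, h⟩ : Fin n) 1 else 0 with hE
  have hBE : ∀ i : ℕ, i + 1 ≤ n - 1 → B i = E i + E (i + 1) := by
    intro i hi
    rw [hB, hE]
    simp only [dif_pos (show i < n by omega), dif_pos (show i + 1 < n by omega)]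
    exact hb_mid ⟨i, by omega⟩ hi
  have hBlast : B (n - 1) = E (n - 1) := by
    rw [hB, hE]
    simp only [dif_pos (show n - 1 < n by omega)]
    exact hb_last
  have tele : ∀ m : ℕ, 1 ≤ m → m ≤ n - 1 →
      ∑ i ∈ Finset.range m, B i = E 0 + E m := by
    intro m hm1
    induction m, hm1 using Nat.le_induction with
    | base =>
      intro _
      rw [Finset.sum_range_one, hBE 0 (by omega)]
    | succ m hm ih =>
      intro hmn
      rw [Finset.sum_range_succ, ih (by omega), hBE m (by omega)]
      rw [show E 0 + E m + (E m + E (m + 1)) = E 0 + (E m + E m) + E (m + 1) by abel,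
        hvv, add_zero]
  have hsumb : ∑ i : Fin n, b i = o 0 := by
    have h1 : ∀ i : Fin n, b i = B i.val := by
      intro i; rw [hB]; simp only [dif_pos i.isLt, Fin.eta]
    rw [Finset.sum_congr rfl fun i _ => h1 i]
    rw [Fin.sum_univ_eq_sum_range]
    have h2 : ∑ i ∈ Finset.range n, B i = ∑ i ∈ Finset.range (n - 1), B i + B (n - 1) := by
      rw [← Finset.sum_range_succ, Nat.sub_add_cancel (by omega)]
    rw [h2, tele (n - 1) (by omega) le_rfl, hBlast]
    rw [add_assoc, hvv, add_zero, h0]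
    simp only [hE]
    rw [dif_pos (show 0 < n by omega)]
  have sum0 : ∑ j : Fin (n + 1), o j = 0 := by
    rw [Fin.sum_univ_succ]
    have h1 : ∑ i : Fin n, o i.succ = o 0 := hsumb
    rw [h1, hvv]
  have hspan : ∀ k : Fin n, Pi.single k (1 : ZMod 2)
      ∈ Submodule.span (ZMod 2) (Set.range b) := by
    have main : ∀ d : ℕ, ∀ k : Fin n, n - 1 - k.val ≤ d →
        Pi.single k (1 : ZMod 2) ∈ Submodule.span (ZMod 2) (Set.range b) := by
      intro d
      induction d with
      | zero =>
        intro k hk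
        have hk1 := k.isLt
        have hk' : k = ⟨n - 1, by omega⟩ := Fin.ext (show k.val = n - 1 by omega)
        rw [hk', ← hb_last]
        exact Submodule.subset_span ⟨_, rfl⟩
      | succ d ih =>
        intro k hk
        have hk1 := k.isLt
        by_cases hk' : k.val = n - 1
        · rw [show k = ⟨n - 1, by omega⟩ from Fin.ext (show k.val = n - 1 by omega), ← hb_last]
          exact Submodule.subset_span ⟨_, rfl⟩
        · have hkle : k.val + 1 ≤ n - 1 := by omega
          have key : Pi.single k (1 : ZMod 2)
              = b ⟨k.val, k.isLt⟩ - Pi.single (⟨k.val + 1, by omega⟩ : Fin n) 1 := by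
            rw [hb_mid ⟨k.val, k.isLt⟩ hkle, add_sub_cancel_right]
          rw [key]
          exact sub_mem (Submodule.subset_span ⟨_, rfl⟩)
            (ih ⟨k.val + 1, by omega⟩ (show n - 1 - (k.val + 1) ≤ d by omega))
    exact fun k => main (n - 1 - k.val) k le_rfl
  have htop : ⊤ ≤ Submodule.span (ZMod 2) (Set.range b) := by
    intro x _
    have hx : x = ∑ k : Fin n, x k • Pi.single k (1 : ZMod 2) := by
      funext u
      simp [Pi.single_apply, Finset.sum_ite_eq', mul_comm]
    rw [hx]
    exact Submodule.sum_mem _ fun k _ => Submodule.smul_mem _ _ (hspan k)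
  have hcard : Fintype.card (Fin n) = Module.finrank (ZMod 2) (Fin n → ZMod 2) := by
    simp [Module.finrank_pi]
  let bB : Module.Basis (Fin n) (ZMod 2) (Fin n → ZMod 2) :=
    basisOfTopLeSpanOfCardEqFinrank b htop hcard
  have hbB : ∀ i, bB i = b i := fun i =>
    congrFun (coe_basisOfTopLeSpanOfCardEqFinrank b htop hcard) i
  -- ## The linear maps attached to permutations
  set F : Equiv.Perm (Fin (n + 1)) → ((Fin n → ZMod 2) →ₗ[ZMod 2] (Fin n → ZMod 2)) :=
    fun σ => bB.constr ℕ (fun i => o (σ i.succ)) with hF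
  have hFb : ∀ σ (i : Fin n), F σ (b i) = o (σ i.succ) := by
    intro σ i
    have h1 := bB.constr_basis ℕ (fun i => o (σ i.succ)) i
    rw [hbB] at h1
    exact h1
  have P1 : ∀ (σ : Equiv.Perm (Fin (n + 1))) (j : Fin (n + 1)), F σ (o j) = o (σ j) := by
    intro σ j
    induction j using Fin.cases with
    | zero =>
      rw [← hsumb, map_sum, Finset.sum_congr rfl fun i _ => hFb σ i]
      have hall : ∑ j : Fin (n + 1), o (σ j) = 0 := by
        rw [Equiv.sum_comp σ o, sum0]
      rw [Fin.sum_univ_succ] at hall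
      have h2 := hvv (o (σ 0))
      calc ∑ i : Fin n, o (σ i.succ)
          = o (σ 0) + (o (σ 0) + ∑ i : Fin n, o (σ i.succ)) := by
            rw [← add_assoc, h2, zero_add]
        _ = o (σ 0) := by rw [hall, add_zero]
    | succ i => exact hFb σ i
  have Fmul : ∀ σ τ, F (σ * τ) = (F σ).comp (F τ) := by
    intro σ τ
    apply bB.ext
    intro i
    rw [hbB i, hFb, LinearMap.comp_apply, hFb, P1]
    rfl
  have Fone : F 1 = LinearMap.id := by
    apply bB.ext
    intro i
    rw [hbB i, hFb]
    rfl
  -- ## The matrices attached to permutations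
  set Mm : Equiv.Perm (Fin (n + 1)) → Matrix (Fin n) (Fin n) (ZMod 2) :=
    fun σ => LinearMap.toMatrix' (F σ) with hMm
  have hMmul : ∀ σ τ, Mm (σ * τ) = Mm σ * Mm τ := by
    intro σ τ
    rw [hMm]
    simp only [Fmul, LinearMap.toMatrix'_comp]
  have hMone : Mm 1 = 1 := by
    rw [hMm]
    simp only [Fone, LinearMap.toMatrix'_id]
  have hMvec : ∀ σ v, Mm σ *ᵥ v = F σ v := by
    intro σ v
    rw [hMm]
    simp only [← Matrix.toLin'_apply, Matrix.toLin'_toMatrix']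
  -- ## The homomorphism to `GL`
  set φ : Equiv.Perm (Fin (n + 1)) →* GL (Fin n) (ZMod 2) :=
    MonoidHom.mk' (fun σ =>
      ⟨Mm σ, Mm σ⁻¹,
        by rw [← hMmul, mul_inv_cancel, hMone],
        by rw [← hMmul, inv_mul_cancel, hMone]⟩)
      (fun σ τ => Units.ext (hMmul σ τ)) with hφ
  have hφval : ∀ σ, ((φ σ : GL (Fin n) (ZMod 2)) : Matrix (Fin n) (Fin n) (ZMod 2)) = Mm σ :=
    fun σ => rfl
  have hφinj : Function.Injective φ := by
    intro σ τ h
    have hM : Mm σ = Mm τ := by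
      rw [← hφval σ, ← hφval τ, h]
    have hFστ : F σ = F τ := LinearMap.toMatrix'.injective hM
    apply Equiv.ext
    intro j
    apply hoinj
    rw [← P1 σ j, ← P1 τ j, hFστ]
  have hφswap : ∀ s : Fin n, ((φ (Equiv.swap s.castSucc s.succ) : GL (Fin n) (ZMod 2)) :
      Matrix (Fin n) (Fin n) (ZMod 2)) = flipMat (pathG n) s := by
    intro s
    rw [hφval]
    have hlin : Matrix.toLin' (flipMat (pathG n) s) = F (Equiv.swap s.castSucc s.succ) := by
      apply bB.ext
      intro i
      rw [hbB i, Matrix.toLin'_apply]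
      show flipMat (pathG n) s *ᵥ (o i.succ) = _
      rw [hcore s i.succ, hFb]
    calc Mm (Equiv.swap s.castSucc s.succ)
        = LinearMap.toMatrix' (F (Equiv.swap s.castSucc s.succ)) := rfl
      _ = LinearMap.toMatrix' (Matrix.toLin' (flipMat (pathG n) s)) := by rw [hlin]
      _ = flipMat (pathG n) s := LinearMap.toMatrix'_toLin' _
  -- ## range of φ is the flipping group
  have hrange : φ.range = flipGroup (pathG n) := by
    apply le_antisymm
    · rintro x ⟨σ, rfl⟩
      have hσ : σ ∈ Submonoid.closure
          (Set.range fun i : Fin n => Equiv.swap i.castSucc i.succ) := by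
        rw [Equiv.Perm.mclosure_swap_castSucc_succ]
        trivial
      induction hσ using Submonoid.closure_induction with
      | mem x hx =>
        obtain ⟨s, rfl⟩ := hx
        exact Subgroup.subset_closure ⟨s, hφswap s⟩
      | one =>
        rw [_root_.map_one]
        exact one_mem _
      | mul x y hx hy ihx ihy =>
        rw [_root_.map_mul]
        exact mul_mem ihx ihy
    · rw [flipGroup]
      apply (Subgroup.closure_le _).mpr
      rintro g ⟨s, hs⟩
      exact ⟨Equiv.swap s.castSucc s.succ, Units.ext (by rw [hφswap s, hs])⟩
  -- ## assembling the isomorphism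
  let e1 : Equiv.Perm (Fin (n + 1)) ≃* φ.range := MonoidHom.ofInjective hφinj
  let e2 : flipGroup (pathG n) ≃* φ.range := MulEquiv.subgroupCongr hrange.symm
  refine ⟨e2.trans e1.symm, ?_⟩
  intro g j
  set σ : Equiv.Perm (Fin (n + 1)) := (e2.trans e1.symm) g with hσdef
  have h1 : ((e1 σ : φ.range) : GL (Fin n) (ZMod 2))
      = ((e2 g : φ.range) : GL (Fin n) (ZMod 2)) := by
    rw [hσdef]
    simp only [MulEquiv.trans_apply]
    rw [e1.apply_symm_apply]
  have h2 : ((e2 g : φ.range) : GL (Fin n) (ZMod 2)) = (g : GL (Fin n) (ZMod 2)) :=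
    MulEquiv.subgroupCongr_apply hrange.symm g
  have h4 : ((e1 σ : φ.range) : GL (Fin n) (ZMod 2)) = φ σ :=
    MonoidHom.ofInjective_apply hφinj
  have h5 : φ σ = (g : GL (Fin n) (ZMod 2)) := h4.symm.trans (h1.trans h2)
  have h3 : ((φ σ : GL (Fin n) (ZMod 2)) : Matrix (Fin n) (Fin n) (ZMod 2))
      = ((g : GL (Fin n) (ZMod 2)) : Matrix (Fin n) (Fin n) (ZMod 2)) := congrArg Units.val h5
  rw [← h3, hφval, hMvec, P1]
end

section
/- The Vogan representation of the Coxeter group of type A_n (n ≥ 2) over F_2 is irreducible (i.e., F_2^n has no nonzero proper subspace invariant under the flipping group) if and only if n is even. -/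
open Matrix

namespace VoganAux

variable {n : ℕ}

noncomputable def E (n i : ℕ) : Fin n → ZMod 2 :=
  if h : i < n then Pi.single ⟨i, h⟩ 1 else 0

lemma E_apply (i : ℕ) (u : Fin n) : E n i u = if (u : ℕ) = i then 1 else 0 := by
  unfold E
  split
  · next h => simp [Pi.single_apply, Fin.ext_iff]
  · next h =>
    rw [Pi.zero_apply, if_neg]
    omega

lemma E_apply_mk (i x : ℕ) (h : x < n) :
    E n i ⟨x, h⟩ = if x = i then 1 else 0 :=
  E_apply i ⟨x, h⟩

lemma E_out (i : ℕ) (h : n ≤ i) : E n i = 0 := by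
  unfold E
  rw [dif_neg]
  omega

lemma E_ne_zero (i : ℕ) (h : i < n) : E n i ≠ 0 := by
  intro he
  have := congrFun he ⟨i, h⟩
  rw [E_apply, if_pos rfl] at this
  simp at this

lemma pathG_adj {u s : Fin n} :
    (pathG n).Adj u s ↔ ((u : ℕ) + 1 = (s : ℕ) ∨ (s : ℕ) + 1 = (u : ℕ)) := by
  rw [pathG, SimpleGraph.fromRel_adj]
  constructor
  · rintro ⟨-, h⟩; exact h
  · intro h
    refine ⟨?_, h⟩
    rintro rfl
    omega

open scoped Classical in
noncomputable def nbr (n : ℕ) (s : Fin n) : Fin n → ZMod 2 :=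
  fun u => if (pathG n).Adj u s then 1 else 0

lemma flip_mulVec (s : Fin n) (v : Fin n → ZMod 2) :
    (flipMat (pathG n) s).mulVec v = v + (v s) • nbr n s := by
  classical
  funext u
  have key : ∀ w : Fin n, flipMat (pathG n) s u w * v w
      = (if u = w then v w else 0)
        + (if w = s then (if (pathG n).Adj u s then v s else 0) else 0) := by
    intro w
    simp only [flipMat, Matrix.of_apply]
    by_cases h1 : u = w
    · subst h1
      by_cases h2 : u = s
      · subst h2
        simp [SimpleGraph.irrefl]
      · simp [h2]
    · by_cases h2 : w = s
      · by_cases h3 : (pathG n).Adj u s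
        · have hus : u ≠ s := fun h => h1 (h.trans h2.symm)
          simp [h2, h3, hus]
        · simp [h1, h2, h3]
      · simp [h1, h2]
  have : (flipMat (pathG n) s).mulVec v u = ∑ w, flipMat (pathG n) s u w * v w := rfl
  rw [this, Finset.sum_congr rfl (fun w _ => key w), Finset.sum_add_distrib,
    Finset.sum_ite_eq, Finset.sum_ite_eq']
  simp [nbr, mul_ite]

lemma nbr_eq (s : Fin n) :
    nbr n s = (if (s : ℕ) = 0 then 0 else E n ((s : ℕ) - 1)) + E n ((s : ℕ) + 1) := by
  funext u
  simp only [nbr, Pi.add_apply, ite_apply, Pi.zero_apply, E_apply, pathG_adj]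
  split_ifs <;> first | decide | (exfalso; omega)

section gen

variable {V : Submodule (ZMod 2) (Fin n → ZMod 2)}
  (hV : ∀ s : Fin n, ∀ v ∈ V, (flipMat (pathG n) s).mulVec v ∈ V)

include hV

lemma nbr_smul_mem {v} (hv : v ∈ V) (s : Fin n) : v s • nbr n s ∈ V := by
  have h := hV s v hv
  rw [flip_mulVec] at h
  simpa using V.sub_mem h hv

lemma nbr_mem {v} (hv : v ∈ V) {s : Fin n} (hs : v s = 1) : nbr n s ∈ V := by
  have := nbr_smul_mem hV hv s
  rwa [hs, one_smul] at this

lemma F_zero {v} (hv : v ∈ V) {s : Fin n} (hs1 : v s = 1) (hs0 : (s : ℕ) = 0) :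
    E n 1 ∈ V := by
  have h := nbr_mem hV hv hs1
  rwa [nbr_eq, if_pos hs0, zero_add, hs0] at h

lemma F_pair {v} (hv : v ∈ V) {s : Fin n} {a : ℕ} (hs1 : v s = 1)
    (hsa : (s : ℕ) = a + 1) : E n a + E n (a + 2) ∈ V := by
  have h := nbr_mem hV hv hs1
  rw [nbr_eq, if_neg (by omega), hsa] at h
  simpa using h

lemma mem_descend : ∀ a, a < n → E n a + E n (a + 2) ∈ V → E n 1 ∈ V := by
  intro a
  induction a with
  | zero =>
    intro h0 hmem
    refine F_zero hV hmem (s := ⟨0, h0⟩) ?_ rfl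
    rw [Pi.add_apply, E_apply_mk, E_apply_mk, if_pos rfl, if_neg (by omega), add_zero]
  | succ b ih =>
    intro hb hmem
    have hb' : b < n := by omega
    have h1 : (E n (b + 1) + E n (b + 1 + 2)) ⟨b + 1, hb⟩ = 1 := by
      rw [Pi.add_apply, E_apply_mk, E_apply_mk, if_pos rfl, if_neg (by omega), add_zero]
    exact ih hb' (F_pair hV hmem (s := ⟨b + 1, hb⟩) h1 rfl)

omit hV in
lemma add_self_zero (x : Fin n → ZMod 2) : x + x = 0 := by
  funext u
  exact CharTwo.add_self_eq_zero _

lemma odd_mem (h1 : E n 1 ∈ V) : ∀ k, 2 * k + 1 < n → E n (2 * k + 1) ∈ V := by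
  intro k
  induction k with
  | zero => intro _; simpa using h1
  | succ m ih =>
    intro hm
    have hlt : 2 * m + 1 < n := by omega
    have hodd : E n (2 * m + 1) ∈ V := ih hlt
    have hv1 : E n (2 * m + 1) ⟨2 * m + 1, hlt⟩ = 1 := by
      rw [E_apply_mk, if_pos rfl]
    have hpair : E n (2 * m) + E n (2 * m + 2) ∈ V :=
      F_pair hV hodd (s := ⟨2 * m + 1, hlt⟩) hv1 rfl
    have hlt2 : 2 * m + 2 < n := by omega
    have hv2 : (E n (2 * m) + E n (2 * m + 2)) ⟨2 * m + 2, hlt2⟩ = 1 := by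
      rw [Pi.add_apply, E_apply_mk, E_apply_mk, if_neg (by omega), if_pos rfl, zero_add]
    have hpair2 : E n (2 * m + 1) + E n (2 * m + 1 + 2) ∈ V :=
      F_pair hV hpair (s := ⟨2 * m + 2, hlt2⟩) hv2 rfl
    have := V.add_mem hodd hpair2
    rw [← add_assoc, add_self_zero, zero_add] at this
    have he : 2 * m + 1 + 2 = 2 * (m + 1) + 1 := by omega
    rwa [he] at this

lemma down_mem (htop : E n (n - 1) ∈ V) (hsub : E n (n - 2) ∈ V) (hn : 2 ≤ n) :
    ∀ d i, i + d = n - 1 → E n i ∈ V := by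
  intro d
  induction d using Nat.strong_induction_on with
  | _ d ih =>
    intro i hi
    match d, hi with
    | 0, hi =>
      have hieq : i = n - 1 := by omega
      simpa [hieq] using htop
    | 1, hi =>
      have : i = n - 2 := by omega
      simpa [this] using hsub
    | (e + 2), hi =>
      have hi1 : i + 1 < n := by omega
      have hmem1 : E n (i + 1) ∈ V := ih (e + 1) (by omega) (i + 1) (by omega)
      have hmem2 : E n (i + 2) ∈ V := ih e (by omega) (i + 2) (by omega)
      have hv1 : E n (i + 1) ⟨i + 1, hi1⟩ = 1 := by rw [E_apply_mk, if_pos rfl]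
      have hpair : E n i + E n (i + 2) ∈ V :=
        F_pair hV hmem1 (s := ⟨i + 1, hi1⟩) hv1 rfl
      have := V.add_mem hpair hmem2
      rwa [add_assoc, add_self_zero, add_zero] at this

lemma all_mem (hn : 2 ≤ n) (heven : Even n) (hne : V ≠ ⊥) (i : ℕ) (hi : i < n) :
    E n i ∈ V := by
  obtain ⟨v, hv, hv0⟩ := Submodule.ne_bot_iff V |>.mp hne
  have hx : ∀ x : ZMod 2, x ≠ 0 → x = 1 := by decide
  have : ∃ s : Fin n, v s = 1 := by
    by_contra h
    push_neg at h
    apply hv0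
    funext u
    by_contra hu
    exact h u (hx _ hu)
  obtain ⟨s, hs⟩ := this
  have he1 : E n 1 ∈ V := by
    rcases Nat.eq_zero_or_eq_succ_pred (s : ℕ) with h0 | hsucc
    · exact F_zero hV hv hs h0
    · exact mem_descend hV _ (by omega) (F_pair hV hv hs hsucc)
  obtain ⟨m, hm⟩ := heven
  have hmlt : 2 * (m - 1) + 1 < n := by omega
  have hlast : E n (n - 1) ∈ V := by
    have := odd_mem hV he1 (m - 1) hmlt
    have he : 2 * (m - 1) + 1 = n - 1 := by omega
    rwa [he] at this
  have hprev : E n (n - 2) ∈ V := by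
    have hlt : n - 1 < n := by omega
    have hv1 : E n (n - 1) ⟨n - 1, hlt⟩ = 1 := by rw [E_apply_mk, if_pos rfl]
    have hpair : E n (n - 2) + E n (n - 2 + 2) ∈ V :=
      F_pair hV hlast (s := ⟨n - 1, hlt⟩) hv1 (by show n - 1 = n - 2 + 1; omega)
    rw [show n - 2 + 2 = n from by omega, E_out n le_rfl, add_zero] at hpair
    exact hpair
  exact down_mem hV hlast hprev hn (n - 1 - i) i (by omega)

end gen

lemma eq_top_of_all {V : Submodule (ZMod 2) (Fin n → ZMod 2)}
    (h : ∀ i, i < n → E n i ∈ V) : V = ⊤ := by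
  rw [eq_top_iff]
  intro v _
  have hv : v = ∑ i : Fin n, Pi.single i (v i) := (Finset.univ_sum_single v).symm
  rw [hv]
  refine Submodule.sum_mem V fun i _ => ?_
  have hs : Pi.single i (v i) = v i • E n (i : ℕ) := by
    funext u
    simp only [Pi.smul_apply, E_apply, smul_eq_mul, mul_ite, mul_one, mul_zero,
      Pi.single_apply, Fin.ext_iff]
  rw [hs]
  exact V.smul_mem _ (h i i.isLt)

noncomputable def phi (n : ℕ) : (Fin n → ZMod 2) →ₗ[ZMod 2] ZMod 2 where
  toFun v := ∑ i : Fin n, (if Even (i : ℕ) then v i else 0)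
  map_add' v w := by
    rw [← Finset.sum_add_distrib]
    refine Finset.sum_congr rfl fun i _ => ?_
    by_cases h : Even (i : ℕ) <;> simp [h]
  map_smul' c v := by
    simp only [RingHom.id_apply, Finset.smul_sum, smul_ite, smul_zero, Pi.smul_apply]

lemma phi_E (i : ℕ) (h : i < n) : phi n (E n i) = if Even i then 1 else 0 := by
  have key : ∀ j : Fin n, (if Even (j : ℕ) then E n i j else 0)
      = if j = ⟨i, h⟩ then (if Even i then 1 else 0) else 0 := by
    intro j
    simp only [E_apply, Fin.ext_iff, Nat.even_iff]
    split_ifs <;> first | rfl | (exfalso; omega)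
  rw [show phi n (E n i)
      = ∑ j : Fin n, (if Even (j : ℕ) then E n i j else (0 : ZMod 2)) from rfl,
    Finset.sum_congr rfl (fun j _ => key j), Finset.sum_ite_eq']
  simp

lemma phi_nbr (hodd : ¬ Even n) (hn : 2 ≤ n) (s : Fin n) : phi n (nbr n s) = 0 := by
  have hn2 : ¬ n % 2 = 0 := by rwa [← Nat.even_iff]
  rw [nbr_eq, map_add]
  by_cases h0 : (s : ℕ) = 0
  · rw [if_pos h0, map_zero, zero_add, h0, phi_E 1 (by omega)]
    simp
  · rw [if_neg h0]
    by_cases hlt : (s : ℕ) + 1 < n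
    · rw [phi_E _ (by omega), phi_E _ hlt]
      by_cases hp : Even ((s : ℕ) - 1)
      · rw [if_pos hp, if_pos (by rw [Nat.even_iff] at *; omega)]
        decide
      · rw [if_neg hp, if_neg (by rw [Nat.even_iff] at *; omega)]
        decide
    · rw [E_out ((s : ℕ) + 1) (by omega), map_zero, add_zero, phi_E ((s : ℕ) - 1) (by omega),
        if_neg (by rw [Nat.even_iff]; have := s.isLt; omega)]

end VoganAux

open VoganAux

/-- The Vogan representation of the Coxeter group of type `Aₙ` (`n ≥ 2`) over `F_2` is
irreducible if and only if `n` is even. -/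
theorem pathG_irreducible_iff_even (n : ℕ) (hn : 2 ≤ n) :
    (∀ V : Submodule (ZMod 2) (Fin n → ZMod 2),
        (∀ (s : Fin n), ∀ v ∈ V, (flipMat (pathG n) s).mulVec v ∈ V) →
        V = ⊥ ∨ V = ⊤)
      ↔ Even n := by
  constructor
  · intro hirr
    by_contra hodd
    have hinv : ∀ s : Fin n, ∀ v ∈ LinearMap.ker (phi n),
        (flipMat (pathG n) s).mulVec v ∈ LinearMap.ker (phi n) := by
      intro s v hv
      rw [LinearMap.mem_ker] at hv ⊢
      rw [flip_mulVec, map_add, LinearMap.map_smul, phi_nbr hodd hn s, smul_zero, add_zero, hv]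
    rcases hirr _ hinv with hb | ht
    · have h1 : E n 1 ∈ LinearMap.ker (phi n) := by
        rw [LinearMap.mem_ker, phi_E 1 (by omega)]
        simp
      rw [hb, Submodule.mem_bot] at h1
      exact E_ne_zero 1 (by omega) h1
    · have h0 : E n 0 ∈ LinearMap.ker (phi n) := ht ▸ Submodule.mem_top
      rw [LinearMap.mem_ker, phi_E 0 (by omega)] at h0
      simp at h0
  · intro heven V hV
    by_cases hb : V = ⊥
    · exact Or.inl hb
    · exact Or.inr (eq_top_of_all (all_mem hV hn heven hb))
end

section
/- Let 𝐖 be the flipping group of the Coxeter graph of type D_n (n ≥ 4). The (n−1)-dimensional subspace Z of F_2^n spanned by ō_1, …, ō_{n−1} is invariant under 𝐖; in particular the Vogan representation of type D_n is not irreducible. -/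
open Matrix

/-- The Coxeter graph of type `Dₙ`, with vertices `0, 1, …, n-1` (vertex `i` standing for
`s_{i+1}`): a path on `0, …, n-2` together with the vertex `n-1` joined to `n-3`. -/
def dG (n : ℕ) : SimpleGraph (Fin n) :=
  SimpleGraph.fromRel
    (fun i j => (i.val + 1 = j.val ∧ j.val ≤ n - 2) ∨ (i.val = n - 3 ∧ j.val = n - 1))

open scoped Classical in
lemma flipMat_mulVec_aux {V : Type*} [Fintype V] (G : SimpleGraph V) (s u : V)
    (v : V → ZMod 2) :
    (flipMat G s).mulVec v u = v u + (if G.Adj u s then v s else 0) := by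
  classical
  simp only [flipMat, Matrix.mulVec, dotProduct, Matrix.of_apply]
  have hx : ∀ x : V, (if u = x ∨ (x = s ∧ G.Adj u x) then (1 : ZMod 2) else 0) * v x
      = (if u = x then v x else 0) + (if x = s then (if G.Adj u s then v s else 0) else 0) := by
    intro x
    by_cases hux : u = x <;> by_cases hxs : x = s
    · subst hux; subst hxs
      simp [G.irrefl]
    · subst hux; simp [hxs]
    · subst hxs
      simp [hux]
    · simp only [if_neg hux, if_neg hxs, add_zero]
      rw [if_neg, zero_mul]
      rintro (h | ⟨h, -⟩) <;> [exact hux h; exact hxs h]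
  rw [Finset.sum_congr rfl (fun x _ => hx x), Finset.sum_add_distrib]
  simp

lemma dG_adj2_iff (n : ℕ) (hn : 3 < n) (s : Fin n) :
    (dG n).Adj ⟨n-2, by omega⟩ s ↔ s.val = n-3 := by
  obtain ⟨sv, hs⟩ := s
  simp only [dG, SimpleGraph.fromRel_adj, ne_eq, Fin.mk.injEq, Fin.ext_iff, Fin.val_mk]
  omega

lemma dG_adj1_iff (n : ℕ) (hn : 3 < n) (s : Fin n) :
    (dG n).Adj ⟨n-1, by omega⟩ s ↔ s.val = n-3 := by
  obtain ⟨sv, hs⟩ := s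
  simp only [dG, SimpleGraph.fromRel_adj, ne_eq, Fin.mk.injEq, Fin.ext_iff, Fin.val_mk]
  refine ⟨fun ⟨h1, h2⟩ => ?_, fun h => ⟨by omega, Or.inr (Or.inr ⟨h, trivial⟩)⟩⟩
  rcases h2 with (⟨h, h'⟩ | ⟨h, h'⟩) | (⟨h, h'⟩ | ⟨h, -⟩) <;> omega

/-- For type `Dₙ` (`n ≥ 4`), the `(n-1)`-dimensional subspace `Z` spanned by
`ō_1, …, ō_{n-1}` (here `o k = ō_{k+1}`) is invariant under the flipping group;
in particular the Vogan representation is not irreducible. -/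
theorem dG_invariant_subspace (n : ℕ) (hn : 4 ≤ n)
    (o : ℕ → (Fin n → ZMod 2))
    (h0 : o 0 = Pi.single (⟨0, by omega⟩ : Fin n) 1)
    (hmid : ∀ (k : ℕ) (_h1 : 1 ≤ k) (_h2 : k ≤ n - 3),
      o k = Pi.single (⟨k - 1, by omega⟩ : Fin n) 1 + Pi.single (⟨k, by omega⟩ : Fin n) 1)
    (hpen : o (n - 2) = Pi.single (⟨n - 3, by omega⟩ : Fin n) 1 +
      Pi.single (⟨n - 2, by omega⟩ : Fin n) 1 + Pi.single (⟨n - 1, by omega⟩ : Fin n) 1)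
    (Z : Submodule (ZMod 2) (Fin n → ZMod 2))
    (hZ : Z = Submodule.span (ZMod 2) (o '' {k : ℕ | k ≤ n - 2})) :
    (∀ s : Fin n, ∀ v ∈ Z, (flipMat (dG n) s).mulVec v ∈ Z) ∧ Z ≠ ⊥ ∧ Z ≠ ⊤ := by
  have hoZ : ∀ k, k ≤ n - 2 → o k ∈ Z := by
    intro k hk
    rw [hZ]
    exact Submodule.subset_span ⟨k, hk, rfl⟩
  -- all standard basis vectors e_j for j ≤ n-3 lie in Z
  have hA : ∀ j, ∀ hj : j ≤ n - 3, Pi.single (⟨j, by omega⟩ : Fin n) (1 : ZMod 2) ∈ Z := by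
    intro j
    induction j with
    | zero => intro _; exact h0 ▸ hoZ 0 (by omega)
    | succ j ih =>
      intro hj
      have hij := ih (by omega)
      have hmm := hmid (j+1) (by omega) hj
      have key : Pi.single (⟨j+1, by omega⟩ : Fin n) (1 : ZMod 2)
          = o (j+1) - Pi.single (⟨j, by omega⟩ : Fin n) 1 := by
        rw [hmm]
        have hfe : (⟨j+1-1, by omega⟩ : Fin n) = (⟨j, by omega⟩ : Fin n) := rfl
        rw [hfe]
        abel
      rw [key]
      exact Submodule.sub_mem _ (hoZ (j+1) (by omega)) hij
  -- the vector w = e_{n-2} + e_{n-1} lies in Z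
  have hw : Pi.single (⟨n-2, by omega⟩ : Fin n) (1 : ZMod 2)
      + Pi.single (⟨n-1, by omega⟩ : Fin n) 1 ∈ Z := by
    have h3 : Pi.single (⟨n-3, by omega⟩ : Fin n) (1 : ZMod 2) ∈ Z := hA (n-3) le_rfl
    have key : Pi.single (⟨n-2, by omega⟩ : Fin n) (1 : ZMod 2)
        + Pi.single (⟨n-1, by omega⟩ : Fin n) 1
        = o (n-2) - Pi.single (⟨n-3, by omega⟩ : Fin n) 1 := by
      rw [hpen]; abel
    rw [key]
    exact Submodule.sub_mem _ (hoZ (n-2) le_rfl) h3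
  -- Z is contained in the kernel of φ(v) = v_{n-2} + v_{n-1}
  have hZker : ∀ v ∈ Z, v ⟨n-2, by omega⟩ + v ⟨n-1, by omega⟩ = 0 := by
    intro v hv
    rw [hZ] at hv
    induction hv using Submodule.span_induction with
    | mem x hx =>
      obtain ⟨k, hk, rfl⟩ := hx
      simp only [Set.mem_setOf_eq] at hk
      by_cases hk0 : k = 0
      · subst hk0
        rw [h0]
        simp only [Pi.single_apply, Fin.mk.injEq]
        split_ifs <;> first | rfl | omega
      · by_cases hk3 : k ≤ n - 3
        · rw [hmid k (by omega) hk3]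
          simp only [Pi.add_apply, Pi.single_apply, Fin.mk.injEq]
          split_ifs <;> first | rfl | omega
        · have hk2 : k = n - 2 := by omega
          subst hk2
          rw [hpen]
          simp only [Pi.add_apply, Pi.single_apply, Fin.mk.injEq]
          split_ifs <;> first | rfl | omega
    | zero => simp
    | add x y hx hy ihx ihy =>
      simp only [Pi.add_apply]
      calc x ⟨n-2, by omega⟩ + y ⟨n-2, by omega⟩ + (x ⟨n-1, by omega⟩ + y ⟨n-1, by omega⟩)
          = (x ⟨n-2, by omega⟩ + x ⟨n-1, by omega⟩)
            + (y ⟨n-2, by omega⟩ + y ⟨n-1, by omega⟩) := by ring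
        _ = 0 := by rw [ihx, ihy, add_zero]
    | smul a x hx ihx =>
      simp only [Pi.smul_apply, smul_eq_mul]
      rw [← mul_add, ihx, mul_zero]
  -- conversely, the kernel of φ is contained in Z
  have hkerZ : ∀ v : Fin n → ZMod 2, v ⟨n-2, by omega⟩ + v ⟨n-1, by omega⟩ = 0 → v ∈ Z := by
    intro v hv
    set w : Fin n → ZMod 2 := Pi.single (⟨n-2, by omega⟩ : Fin n) 1
      + Pi.single (⟨n-1, by omega⟩ : Fin n) 1 with hwdef
    have hmemw : v + v ⟨n-2, by omega⟩ • w ∈ Z := by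
      have hsum : v + v ⟨n-2, by omega⟩ • w
          = ∑ u : Fin n, Pi.single u ((v + v ⟨n-2, by omega⟩ • w) u) :=
        (Finset.univ_sum_single _).symm
      rw [hsum]
      refine Submodule.sum_mem _ fun u _ => ?_
      by_cases hu : u.val ≤ n - 3
      · have hs : Pi.single u ((v + v ⟨n-2, by omega⟩ • w) u)
            = ((v + v ⟨n-2, by omega⟩ • w) u) • (Pi.single u 1 : Fin n → ZMod 2) := by
          funext x
          simp only [Pi.single_apply, Pi.smul_apply, smul_eq_mul]
          split <;> simp
        rw [hs]
        have := hA u.val hu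
        have heta : (⟨u.val, by omega⟩ : Fin n) = u := rfl
        rw [heta] at this
        exact Submodule.smul_mem _ _ this
      · have hu2 : u = (⟨n-2, by omega⟩ : Fin n) ∨ u = (⟨n-1, by omega⟩ : Fin n) := by
          obtain ⟨uv, hu'⟩ := u
          simp only [Fin.mk.injEq]
          simp only [Fin.val_mk] at hu
          omega
        have hval : (v + v ⟨n-2, by omega⟩ • w) u = 0 := by
          rcases hu2 with h | h
          · rw [h]
            simp only [Pi.add_apply, Pi.smul_apply, smul_eq_mul, hwdef, Pi.single_apply,
              Fin.mk.injEq]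
            rw [if_pos trivial, if_neg (by omega)]
            rw [add_zero, mul_one]
            exact CharTwo.add_self_eq_zero _
          · rw [h]
            simp only [Pi.add_apply, Pi.smul_apply, smul_eq_mul, hwdef, Pi.single_apply,
              Fin.mk.injEq]
            rw [if_neg (by omega), if_pos trivial]
            rw [zero_add, mul_one, add_comm]
            exact hv
        rw [hval, Pi.single_zero]
        exact Z.zero_mem
    have hvv : v = (v + v ⟨n-2, by omega⟩ • w) + v ⟨n-2, by omega⟩ • w := by
      rw [add_assoc, ← add_smul, CharTwo.add_self_eq_zero, zero_smul, add_zero]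
    rw [hvv]
    exact Submodule.add_mem _ hmemw (Submodule.smul_mem _ _ hw)
  refine ⟨?_, ?_, ?_⟩
  · -- invariance
    intro s v hv
    apply hkerZ
    rw [flipMat_mulVec_aux, flipMat_mulVec_aux]
    have hadj : (dG n).Adj ⟨n-2, by omega⟩ s ↔ (dG n).Adj ⟨n-1, by omega⟩ s :=
      (dG_adj2_iff n hn s).trans (dG_adj1_iff n hn s).symm
    have h := hZker v hv
    by_cases hs : (dG n).Adj ⟨n-2, by omega⟩ s
    · rw [if_pos hs, if_pos (hadj.mp hs)]
      have h2 : v s + v s = 0 := CharTwo.add_self_eq_zero _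
      linear_combination h + h2
    · rw [if_neg hs, if_neg (fun hh => hs (hadj.mpr hh))]
      rw [add_zero, add_zero]
      exact h
  · -- Z ≠ ⊥
    intro hbot
    have h1 : o 0 ∈ Z := hoZ 0 (by omega)
    rw [hbot, Submodule.mem_bot] at h1
    rw [h0] at h1
    have := congrFun h1 ⟨0, by omega⟩
    rw [Pi.single_eq_same] at this
    exact one_ne_zero this
  · -- Z ≠ ⊤
    intro htop
    have h1 : Pi.single (⟨n-1, by omega⟩ : Fin n) (1 : ZMod 2) ∈ Z := by
      rw [htop]; trivial
    have h2 := hZker _ h1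
    rw [Pi.single_eq_same, Pi.single_eq_of_ne (by simp [Fin.ext_iff]; omega)] at h2
    rw [zero_add] at h2
    exact one_ne_zero h2
end

section
/- For the graph E_n (n ≥ 6), the cardinality of the orbit O_1 = { a ∈ F_2^n : a ≠ 0, wt(a) ≡ 1 or n−2 (mod 4) } (weight with respect to the simple basis) equals: 2^{n−1} − (−1)^{n/4} 2^{(n−2)/2} if n ≡ 0 (mod 4); 2^{n−1} if n ≡ 1 (mod 4); 2^{n−1} + (−1)^{(n−2)/4} 2^{(n−2)/2} − 1 if n ≡ 2 (mod 4); 2^{n−2} + (−1)^{(n−3)/4} 2^{(n−3)/2} if n ≡ 3 (mod 4). Equivalently, the count of subsets of an n-set whose size k satisfies 1 ≤ k ≤ n and k ≡ 1 or n−2 (mod 4) is given by the formula above. -/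
open Finset

/-- Sum of binomial coefficients `n.choose k` over `k ≡ r (mod 4)`. -/
def eGFr (n r : ℕ) : ℤ :=
  ∑ k ∈ Finset.range (n + 1), if k % 4 = r then (n.choose k : ℤ) else 0

lemma eGFr_sum (n : ℕ) : eGFr n 0 + eGFr n 1 + eGFr n 2 + eGFr n 3 = 2 ^ n := by
  unfold eGFr
  rw [← sum_add_distrib, ← sum_add_distrib, ← sum_add_distrib]
  have h : ∀ k ∈ range (n + 1),
      ((if k % 4 = 0 then (n.choose k : ℤ) else 0) + (if k % 4 = 1 then (n.choose k : ℤ) else 0)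
        + (if k % 4 = 2 then (n.choose k : ℤ) else 0)
        + (if k % 4 = 3 then (n.choose k : ℤ) else 0)) = (n.choose k : ℤ) := by
    intro k _
    have h4 : k % 4 = 0 ∨ k % 4 = 1 ∨ k % 4 = 2 ∨ k % 4 = 3 := by omega
    rcases h4 with h | h | h | h <;> simp [h]
  rw [sum_congr rfl h]
  rw [← Nat.cast_sum, Nat.sum_range_choose]
  push_cast; ring

lemma eGFr_alt (n : ℕ) (hn : n ≠ 0) :
    eGFr n 0 - eGFr n 1 + eGFr n 2 - eGFr n 3 = 0 := by
  unfold eGFr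
  rw [← sum_sub_distrib, ← sum_add_distrib, ← sum_sub_distrib]
  have h : ∀ k ∈ range (n + 1),
      ((if k % 4 = 0 then (n.choose k : ℤ) else 0) - (if k % 4 = 1 then (n.choose k : ℤ) else 0)
        + (if k % 4 = 2 then (n.choose k : ℤ) else 0)
        - (if k % 4 = 3 then (n.choose k : ℤ) else 0)) = (-1) ^ k * (n.choose k : ℤ) := by
    intro k _
    have h4 : k % 4 = 0 ∨ k % 4 = 1 ∨ k % 4 = 2 ∨ k % 4 = 3 := by omega
    rcases h4 with h | h | h | h
    · have he : Even k := by rw [Nat.even_iff]; omega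
      rw [he.neg_one_pow]; simp [h]
    · have he : Odd k := by rw [Nat.odd_iff]; omega
      rw [he.neg_one_pow]; simp [h]
    · have he : Even k := by rw [Nat.even_iff]; omega
      rw [he.neg_one_pow]; simp [h]
    · have he : Odd k := by rw [Nat.odd_iff]; omega
      rw [he.neg_one_pow]; simp [h]
  rw [sum_congr rfl h, Int.alternating_sum_range_choose, if_neg hn]

/-- `(1 + i)^n` in the Gaussian integers, in terms of the `eGFr` sums. -/
lemma eGFr_gauss (n : ℕ) :
    ((⟨1, 1⟩ : GaussianInt)) ^ n = ⟨eGFr n 0 - eGFr n 2, eGFr n 1 - eGFr n 3⟩ := by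
  have hi : (⟨1, 1⟩ : GaussianInt) = Zsqrtd.sqrtd + 1 := by
    rw [Zsqrtd.ext_iff]; simp
  have hcomm : Commute (Zsqrtd.sqrtd : GaussianInt) 1 := Commute.one_right _
  rw [hi, hcomm.add_pow]
  have hterm : ∀ k ∈ range (n + 1),
      ((Zsqrtd.sqrtd : GaussianInt) ^ k * 1 ^ (n - k) * (n.choose k : GaussianInt))
        = ⟨(if k % 4 = 0 then (n.choose k : ℤ) else 0) - (if k % 4 = 2 then (n.choose k : ℤ) else 0),
            (if k % 4 = 1 then (n.choose k : ℤ) else 0) - (if k % 4 = 3 then (n.choose k : ℤ) else 0)⟩ := by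
    intro k _
    have hs4 : (Zsqrtd.sqrtd : GaussianInt) ^ 4 = 1 := by
      rw [Zsqrtd.ext_iff]
      norm_num [pow_succ, Zsqrtd.re_mul, Zsqrtd.im_mul]
    have hk : (Zsqrtd.sqrtd : GaussianInt) ^ k = (Zsqrtd.sqrtd : GaussianInt) ^ (k % 4) := by
      conv_lhs => rw [← Nat.mod_add_div k 4, pow_add, pow_mul, hs4, one_pow, mul_one]
    rw [hk, one_pow, mul_one]
    have h4 : k % 4 = 0 ∨ k % 4 = 1 ∨ k % 4 = 2 ∨ k % 4 = 3 := by omega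
    rcases h4 with h | h | h | h <;>
      rw [h] <;> rw [Zsqrtd.ext_iff] <;>
        norm_num [pow_succ, Zsqrtd.re_mul, Zsqrtd.im_mul, Zsqrtd.re_natCast, Zsqrtd.im_natCast]
  rw [sum_congr rfl hterm]
  unfold eGFr
  rw [Zsqrtd.ext_iff]
  constructor
  · have : ((∑ k ∈ range (n+1), (⟨(if k % 4 = 0 then (n.choose k : ℤ) else 0) - (if k % 4 = 2 then (n.choose k : ℤ) else 0),
        (if k % 4 = 1 then (n.choose k : ℤ) else 0) - (if k % 4 = 3 then (n.choose k : ℤ) else 0)⟩ : GaussianInt)).re)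
        = ∑ k ∈ range (n+1), ((if k % 4 = 0 then (n.choose k : ℤ) else 0) - (if k % 4 = 2 then (n.choose k : ℤ) else 0)) := by
      exact map_sum (⟨⟨Zsqrtd.re, rfl⟩, fun _ _ => rfl⟩ : GaussianInt →+ ℤ) _ _
    rw [this, sum_sub_distrib]
  · have : ((∑ k ∈ range (n+1), (⟨(if k % 4 = 0 then (n.choose k : ℤ) else 0) - (if k % 4 = 2 then (n.choose k : ℤ) else 0),
        (if k % 4 = 1 then (n.choose k : ℤ) else 0) - (if k % 4 = 3 then (n.choose k : ℤ) else 0)⟩ : GaussianInt)).im)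
        = ∑ k ∈ range (n+1), ((if k % 4 = 1 then (n.choose k : ℤ) else 0) - (if k % 4 = 3 then (n.choose k : ℤ) else 0)) := by
      exact map_sum (⟨⟨Zsqrtd.im, rfl⟩, fun _ _ => rfl⟩ : GaussianInt →+ ℤ) _ _
    rw [this, sum_sub_distrib]

lemma eGFr_pow4 : ((⟨1, 1⟩ : GaussianInt)) ^ 4 = (⟨-4, 0⟩ : GaussianInt) := by
  rw [Zsqrtd.ext_iff]
  norm_num [pow_succ, Zsqrtd.re_mul, Zsqrtd.im_mul]

lemma eGFr_hg (n : ℕ) :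
    eGFr n 0 - eGFr n 2 = (-4) ^ (n / 4) * (((⟨1, 1⟩ : GaussianInt)) ^ (n % 4)).re ∧
    eGFr n 1 - eGFr n 3 = (-4) ^ (n / 4) * (((⟨1, 1⟩ : GaussianInt)) ^ (n % 4)).im := by
  have h := eGFr_gauss n
  conv_lhs at h => rw [← Nat.mod_add_div n 4, pow_add, pow_mul, eGFr_pow4]
  have hc : ((⟨-4, 0⟩ : GaussianInt)) ^ (n / 4) = (⟨(-4) ^ (n / 4), 0⟩ : GaussianInt) := by
    induction (n / 4) with
    | zero => rw [Zsqrtd.ext_iff]; simp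
    | succ m ih =>
      rw [pow_succ, pow_succ, ih, Zsqrtd.ext_iff]
      simp [Zsqrtd.re_mul, Zsqrtd.im_mul]
  rw [hc] at h
  rw [Zsqrtd.ext_iff] at h
  simp only [Zsqrtd.re_mul, Zsqrtd.im_mul] at h
  constructor
  · rw [← h.1]; ring
  · rw [← h.2]; ring

lemma eG_split2 (n a b : ℕ) (hab : a ≠ b) :
    (∑ k ∈ Finset.Icc 1 n, if k % 4 = a ∨ k % 4 = b then (n.choose k : ℤ) else 0)
      = eGFr n a + eGFr n b - (if 0 % 4 = a ∨ 0 % 4 = b then 1 else 0) := by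
  have hset : Finset.range (n + 1) = insert 0 (Finset.Icc 1 n) := by
    ext k; simp only [Finset.mem_range, Finset.mem_insert, Finset.mem_Icc]; omega
  have h0 : (0 : ℕ) ∉ Finset.Icc 1 n := by simp
  have hor : ∀ k, (if k % 4 = a ∨ k % 4 = b then (n.choose k : ℤ) else 0)
      = (if k % 4 = a then (n.choose k : ℤ) else 0)
        + (if k % 4 = b then (n.choose k : ℤ) else 0) := by
    intro k
    by_cases ha : k % 4 = a <;> by_cases hb : k % 4 = b <;> simp_all
  unfold eGFr
  rw [hset, Finset.sum_insert h0, Finset.sum_insert h0,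
    Finset.sum_congr rfl (fun k _ => hor k), Finset.sum_add_distrib]
  simp only [Nat.choose_zero_right, Nat.cast_one, Nat.zero_mod]
  split_ifs <;> simp_all <;> try ring

lemma eG_split1 (n a : ℕ) (ha : a ≠ 0) :
    (∑ k ∈ Finset.Icc 1 n, if k % 4 = a then (n.choose k : ℤ) else 0) = eGFr n a := by
  have hset : Finset.range (n + 1) = insert 0 (Finset.Icc 1 n) := by
    ext k; simp only [Finset.mem_range, Finset.mem_insert, Finset.mem_Icc]; omega
  have h0 : (0 : ℕ) ∉ Finset.Icc 1 n := by simp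
  unfold eGFr
  rw [hset, Finset.sum_insert h0]
  simp [Ne.symm ha]

/-- The number of subsets of an `n`-set (`n ≥ 6`) whose size `k` satisfies `1 ≤ k ≤ n` and
`k ≡ 1` or `n - 2 (mod 4)` — the cardinality of the orbit `O₁` for type `Eₙ` — is:
`2^(n-1) - (-1)^(n/4) * 2^((n-2)/2)` if `n ≡ 0 (mod 4)`;
`2^(n-1)` if `n ≡ 1 (mod 4)`;
`2^(n-1) + (-1)^((n-2)/4) * 2^((n-2)/2) - 1` if `n ≡ 2 (mod 4)`;
`2^(n-2) + (-1)^((n-3)/4) * 2^((n-3)/2)` if `n ≡ 3 (mod 4)`. -/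
theorem eG_orbit_one_card (n : ℕ) (hn : 6 ≤ n) :
    (n % 4 = 0 →
      (∑ k ∈ Finset.Icc 1 n,
          if k % 4 = 1 % 4 ∨ k % 4 = (n - 2) % 4 then (n.choose k : ℤ) else 0)
        = 2 ^ (n - 1) - (-1) ^ (n / 4) * 2 ^ ((n - 2) / 2)) ∧
    (n % 4 = 1 →
      (∑ k ∈ Finset.Icc 1 n,
          if k % 4 = 1 % 4 ∨ k % 4 = (n - 2) % 4 then (n.choose k : ℤ) else 0)
        = 2 ^ (n - 1)) ∧
    (n % 4 = 2 →
      (∑ k ∈ Finset.Icc 1 n,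
          if k % 4 = 1 % 4 ∨ k % 4 = (n - 2) % 4 then (n.choose k : ℤ) else 0)
        = 2 ^ (n - 1) + (-1) ^ ((n - 2) / 4) * 2 ^ ((n - 2) / 2) - 1) ∧
    (n % 4 = 3 →
      (∑ k ∈ Finset.Icc 1 n,
          if k % 4 = 1 % 4 ∨ k % 4 = (n - 2) % 4 then (n.choose k : ℤ) else 0)
        = 2 ^ (n - 2) + (-1) ^ ((n - 3) / 4) * 2 ^ ((n - 3) / 2)) := by
  refine ⟨?_, ?_, ?_, ?_⟩
  · -- n ≡ 0 (mod 4)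
    intro hr
    obtain ⟨m, rfl⟩ : ∃ m, n = 4 * m + 8 := ⟨(n - 8) / 4, by omega⟩
    set N := 4 * m + 8 with hN
    have hc : (N - 2) % 4 = 2 := by omega
    have h1 : 1 % 4 = 1 := by norm_num
    simp only [hc, h1]
    rw [eG_split2 N 1 2 (by omega)]
    have hg := (eGFr_hg N).2
    have hh := (eGFr_hg N).1
    have hm : N % 4 = 0 := by omega
    have hd : N / 4 = m + 2 := by omega
    rw [hm, hd] at hg hh
    simp only [pow_zero, Zsqrtd.re_one, Zsqrtd.im_one, mul_one, mul_zero] at hg hh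
    have hA := eGFr_sum N
    rw [show N - 1 = 4 * m + 7 from by omega, show (N - 2) / 2 = 2 * m + 3 from by omega, hd]
    have hpow : ((-4 : ℤ)) ^ (m + 2) = (-1) ^ (m + 2) * 2 ^ (2 * m + 4) := by
      rw [show (-4 : ℤ) = -1 * 2 ^ 2 from by norm_num, mul_pow, ← pow_mul]
      ring_nf
    have key : (2 : ℤ) * (eGFr N 1 + eGFr N 2)
        = 2 * (2 ^ (4 * m + 7) - (-1) ^ (m + 2) * 2 ^ (2 * m + 3)) := by
      have hN8 : (2 : ℤ) ^ N = 2 ^ (4 * m + 8) := by rw [hN]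
      linear_combination hA + hg - hh - hpow + hN8
    have := mul_left_cancel₀ (two_ne_zero : (2 : ℤ) ≠ 0) key
    norm_num [this]
  · -- n ≡ 1 (mod 4)
    intro hr
    have hc : (n - 2) % 4 = 3 := by omega
    have h1 : 1 % 4 = 1 := by norm_num
    simp only [hc, h1]
    rw [eG_split2 n 1 3 (by omega)]
    have hA := eGFr_sum n
    have hB := eGFr_alt n (by omega)
    have hN : (2 : ℤ) ^ n = 2 * 2 ^ (n - 1) := by
      rw [← pow_succ']; congr 1; omega
    have key : (2 : ℤ) * (eGFr n 1 + eGFr n 3) = 2 * 2 ^ (n - 1) := by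
      linear_combination hA - hB + hN
    have := mul_left_cancel₀ (two_ne_zero : (2 : ℤ) ≠ 0) key
    norm_num [this]
  · -- n ≡ 2 (mod 4)
    intro hr
    obtain ⟨m, rfl⟩ : ∃ m, n = 4 * m + 6 := ⟨(n - 6) / 4, by omega⟩
    set N := 4 * m + 6 with hN
    have hc : (N - 2) % 4 = 0 := by omega
    have h1 : 1 % 4 = 1 := by norm_num
    simp only [hc, h1]
    rw [eG_split2 N 1 0 (by omega)]
    have hg := (eGFr_hg N).2
    have hh := (eGFr_hg N).1
    have hm : N % 4 = 2 := by omega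
    have hd : N / 4 = m + 1 := by omega
    rw [hm, hd] at hg hh
    have hre : (((⟨1, 1⟩ : GaussianInt)) ^ 2).re = 0 := by
      norm_num [pow_succ, Zsqrtd.re_mul, Zsqrtd.im_mul]
    have him : (((⟨1, 1⟩ : GaussianInt)) ^ 2).im = 2 := by
      norm_num [pow_succ, Zsqrtd.re_mul, Zsqrtd.im_mul]
    rw [hre, mul_zero] at hh
    rw [him] at hg
    have hA := eGFr_sum N
    rw [show N - 1 = 4 * m + 5 from by omega, show (N - 2) / 2 = 2 * m + 2 from by omega,
      show (N - 2) / 4 = m + 1 from by omega]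
    have hpow : ((-4 : ℤ)) ^ (m + 1) = (-1) ^ (m + 1) * 2 ^ (2 * m + 2) := by
      rw [show (-4 : ℤ) = -1 * 2 ^ 2 from by norm_num, mul_pow, ← pow_mul]
      ring_nf
    have key : (4 : ℤ) * (eGFr N 1 + eGFr N 0 - 1)
        = 4 * (2 ^ (4 * m + 5) + (-1) ^ (m + 1) * 2 ^ (2 * m + 2) - 1) := by
      have hN8 : (2 : ℤ) ^ N = 2 ^ (4 * m + 6) := by rw [hN]
      linear_combination 2 * hA + 2 * hg + 2 * hh + 4 * hpow + 2 * hN8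
    have := mul_left_cancel₀ (by norm_num : (4 : ℤ) ≠ 0) key
    norm_num [this]
  · -- n ≡ 3 (mod 4)
    intro hr
    obtain ⟨m, rfl⟩ : ∃ m, n = 4 * m + 7 := ⟨(n - 7) / 4, by omega⟩
    set N := 4 * m + 7 with hN
    have hc : (N - 2) % 4 = 1 := by omega
    have h1 : 1 % 4 = 1 := by norm_num
    simp only [hc, h1, or_self]
    rw [eG_split1 N 1 (by omega)]
    have hg := (eGFr_hg N).2
    have hm : N % 4 = 3 := by omega
    have hd : N / 4 = m + 1 := by omega
    rw [hm, hd] at hg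
    have him : (((⟨1, 1⟩ : GaussianInt)) ^ 3).im = 2 := by
      norm_num [pow_succ, Zsqrtd.re_mul, Zsqrtd.im_mul]
    rw [him] at hg
    have hA := eGFr_sum N
    have hB := eGFr_alt N (by omega)
    rw [show N - 2 = 4 * m + 5 from by omega, show (N - 3) / 2 = 2 * m + 2 from by omega,
      show (N - 3) / 4 = m + 1 from by omega]
    have hpow : ((-4 : ℤ)) ^ (m + 1) = (-1) ^ (m + 1) * 2 ^ (2 * m + 2) := by
      rw [show (-4 : ℤ) = -1 * 2 ^ 2 from by norm_num, mul_pow, ← pow_mul]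
      ring_nf
    have key : (4 : ℤ) * (eGFr N 1)
        = 4 * (2 ^ (4 * m + 5) + (-1) ^ (m + 1) * 2 ^ (2 * m + 2)) := by
      have hN8 : (2 : ℤ) ^ N = 2 ^ (4 * m + 7) := by rw [hN]
      linear_combination hA - hB + 2 * hg + 4 * hpow + hN8
    have := mul_left_cancel₀ (by norm_num : (4 : ℤ) ≠ 0) key
    norm_num [this]
end
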